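/- arXiv:2009.06721 — 11 statements merged into one kernel-verified Lean document; each statement's English description precedes it below -/
import Mathlib

section
/- Let (X, ρ) be an extended metric space (ρ may take value +∞), and let d be a natural number. Then the following are equivalent: (1) for every r > 0 there is an equivalence relation E on X whose classes have uniformly bounded diameter such that every closed ball of radius r meets at most d+1 classes of E; (2) for every r > 0 there are sets U_0, ..., U_d covering X such that for each i, the equivalence relation on U_i generated by pairs at distance ≤ r has uniformly bounded classes. -/
open scoped ENNReal NNReal

/-- The `s`-walk equivalence relation on `U`: the smallest equivalence relation
containing all pairs in `U × U` at extended distance at most `s`. -/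
def walkRel {X : Type*} [EMetricSpace X] (U : Set X) (s : ℝ≥0∞) : X → X → Prop :=
  Relation.EqvGen fun a b => a ∈ U ∧ b ∈ U ∧ edist a b ≤ s

/-!
(1) ⇒ (2): take `E` for the radius `(d + 1) r` and let `N_x(k)` be the set of classes meeting
the closed ball of radius `k r` about `x`. Since `N_x(0)` is nonempty and `|N_x(d + 1)| ≤ d + 1`,
some level `k ≤ d` has `|N_x(k)| ≥ k + 1 ≥ |N_x(k + 1)|`; put `x` into `U_k` for every such `k`.
If `x, y ∈ U_k` are `r`-close, the inclusions `N_x(k) ⊆ N_y(k + 1)` and `N_y(k) ⊆ N_x(k + 1)` are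
equalities by counting, so `N_x(k) = N_y(k)`. Thus `N(k)` is constant on the `r`-walk classes
of `U_k`, which therefore have diameter at most `R + d r`.

(2) ⇒ (1): take the cover for the radius `2 r`, colour each point by a set `U_i` containing it,
and relate points of the same colour `i` lying in one `2 r`-walk class of `U_i`. Two points of
the same colour in a ball of radius `r` are `2 r`-close, so the ball meets at most one class
per colour.
-/
open Metric Set

theorem exists_succ_le_apply_and_apply_succ_le {f : ℕ → ℕ∞} (h0 : 1 ≤ f 0) :
    ∀ d : ℕ, f (d + 1) ≤ (d + 1 : ℕ) →
      ∃ k ≤ d, ((k + 1 : ℕ) : ℕ∞) ≤ f k ∧ f (k + 1) ≤ (k + 1 : ℕ)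
  | 0, h => ⟨0, le_rfl, by simpa using h0, h⟩
  | d + 1, h => by
    by_cases hd : f (d + 1) ≤ (d + 1 : ℕ)
    · obtain ⟨k, hk, hkf⟩ := exists_succ_le_apply_and_apply_succ_le h0 d hd
      exact ⟨k, by omega, hkf⟩
    · exact ⟨d + 1, le_rfl, Order.add_one_le_of_lt (not_le.1 hd), h⟩

theorem exists_finset_card_le_forall_exists_eq {α ι : Type*} [Fintype ι] [Nonempty α]
    (c : α → ι) (B : Set α) :
    ∃ s : Finset α, s.card ≤ Fintype.card ι ∧ ∀ y ∈ B, ∃ z ∈ s, z ∈ B ∧ c z = c y := by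
  classical
  refine ⟨Finset.univ.image (Function.invFunOn c B), Finset.card_image_le, fun y hy => ?_⟩
  obtain ⟨hzB, hcz⟩ := Function.invFunOn_pos (b := c y) ⟨y, hy, rfl⟩
  exact ⟨_, Finset.mem_image_of_mem _ (Finset.mem_univ (c y)), hzB, hcz⟩

section

variable {X : Type*} [EMetricSpace X]

theorem walkRel.apply_eq {β : Type*} {U : Set X} {s : ℝ≥0∞} {g : X → β}
    (hg : ∀ a ∈ U, ∀ b ∈ U, edist a b ≤ s → g a = g b) {x y : X} (h : walkRel U s x y) :
    g x = g y :=
  Setoid.eqvGen_le (s := Setoid.ker g) (fun a b ⟨ha, hb, hab⟩ => hg a ha b hb hab) h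

def ballClasses (E : Setoid X) (x : X) (t : ℝ≥0∞) : Set (Quotient E) :=
  Quotient.mk E '' closedEBall x t

theorem mk_mem_ballClasses (E : Setoid X) (x : X) (t : ℝ≥0∞) :
    Quotient.mk E x ∈ ballClasses E x t :=
  mem_image_of_mem _ mem_closedEBall_self

theorem ballClasses_subset_of_edist_le (E : Setoid X) {x y : X} {r : ℝ≥0∞}
    (hxy : edist x y ≤ r) (t : ℝ≥0∞) : ballClasses E x t ⊆ ballClasses E y (t + r) :=
  image_mono fun z hz => (edist_triangle z x y).trans (add_le_add hz hxy)

theorem encard_ballClasses_le {E : Setoid X} {x : X} {t : ℝ≥0∞} {s : Finset X}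
    (hs : ∀ y, edist x y ≤ t → ∃ z ∈ s, E.r y z) : (ballClasses E x t).encard ≤ s.card :=
  calc (ballClasses E x t).encard ≤ (Quotient.mk E '' (s : Set X)).encard := by
        refine encard_mono ?_
        rintro _ ⟨y, hy, rfl⟩
        obtain ⟨z, hz, hyz⟩ := hs y (mem_closedEBall'.1 hy)
        exact ⟨z, hz, (Quotient.sound hyz).symm⟩
    _ ≤ (s : Set X).encard := encard_image_le _ _
    _ = s.card := encard_coe_eq_coe_finsetCard s

def IsStableLevel (E : Setoid X) (r : ℝ≥0∞) (x : X) (k : ℕ) : Prop :=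
  ((k + 1 : ℕ) : ℕ∞) ≤ (ballClasses E x (k * r)).encard ∧
    (ballClasses E x ((k + 1 : ℕ) * r)).encard ≤ (k + 1 : ℕ)

theorem exists_isStableLevel {E : Setoid X} {r : ℝ≥0∞} {x : X} {d : ℕ}
    (h : (ballClasses E x ((d + 1 : ℕ) * r)).encard ≤ (d + 1 : ℕ)) :
    ∃ k ≤ d, IsStableLevel E r x k :=
  exists_succ_le_apply_and_apply_succ_le (f := fun k => (ballClasses E x (k * r)).encard)
    (one_le_encard_iff_nonempty.2 ⟨_, mk_mem_ballClasses E x _⟩) d h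

theorem IsStableLevel.ballClasses_eq {E : Setoid X} {r : ℝ≥0∞} {x y : X} {k : ℕ}
    (hx : IsStableLevel E r x k) (hy : IsStableLevel E r y k) (hxy : edist x y ≤ r) :
    ballClasses E x (k * r) = ballClasses E y (k * r) := by
  have key : ∀ {a b : X}, IsStableLevel E r a k → IsStableLevel E r b k → edist a b ≤ r →
      ballClasses E a (k * r) = ballClasses E b ((k + 1 : ℕ) * r) := fun ha hb hab =>
    (finite_of_encard_le_coe hb.2).eq_of_subset_of_encard_le'
      (by simpa [add_one_mul] using ballClasses_subset_of_edist_le E hab (k * r)) (hb.2.trans ha.1)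
  have mono : ∀ a : X, ballClasses E a (k * r) ⊆ ballClasses E a ((k + 1 : ℕ) * r) := fun a =>
    image_mono (closedEBall_subset_closedEBall (by gcongr; omega))
  refine (mono x).trans_eq (key hy hx (edist_comm x y ▸ hxy)).symm |>.antisymm ?_
  exact (mono y).trans_eq (key hx hy hxy).symm

theorem edist_le_of_walkRel_isStableLevel {E : Setoid X} {R : ℝ≥0∞}
    (hR : ∀ x y, E.r x y → edist x y ≤ R) {r : ℝ≥0∞} {k : ℕ} {x y : X}
    (h : walkRel {z | IsStableLevel E r z k} r x y) : edist x y ≤ R + k * r := by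
  have hN : ballClasses E x (k * r) = ballClasses E y (k * r) :=
    h.apply_eq fun a ha b hb hab => ha.ballClasses_eq hb hab
  obtain ⟨w, hwy, hwx⟩ : Quotient.mk E x ∈ ballClasses E y (k * r) :=
    hN ▸ mk_mem_ballClasses E x _
  calc edist x y ≤ edist x w + edist w y := edist_triangle x w y
    _ ≤ R + k * r := add_le_add (hR x w (E.symm (Quotient.exact hwx))) hwy

theorem exists_cover_walkRel_bounded_of_setoid (E : Setoid X) {R : ℝ≥0}
    (hR : ∀ x y, E.r x y → edist x y ≤ R) {r : ℝ≥0} {d : ℕ}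
    (hE : ∀ x, (ballClasses E x ((d + 1 : ℕ) * r)).encard ≤ (d + 1 : ℕ)) :
    ∃ U : Fin (d + 1) → Set X, ⋃ i, U i = univ ∧
      ∀ i x y, walkRel (U i) r x y → edist x y ≤ ↑(R + d * r) := by
  refine ⟨fun i => {z | IsStableLevel E r z i}, eq_univ_of_forall fun x => ?_, fun i x y h => ?_⟩
  · obtain ⟨k, hk, hxk⟩ := exists_isStableLevel (hE x)
    exact mem_iUnion.2 ⟨⟨k, Nat.lt_succ_of_le hk⟩, hxk⟩
  · refine (edist_le_of_walkRel_isStableLevel hR h).trans ?_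
    push_cast
    gcongr
    exact_mod_cast i.is_le

def colorWalkSetoid {ι : Type*} (U : ι → Set X) (c : X → ι) (s : ℝ≥0∞) : Setoid X where
  r x y := c x = c y ∧ walkRel (U (c x)) s x y
  iseqv :=
    { refl := fun x => ⟨rfl, .refl x⟩
      symm := fun ⟨hc, h⟩ => ⟨hc.symm, hc ▸ .symm _ _ h⟩
      trans := fun ⟨hc, h⟩ ⟨hc', h'⟩ => ⟨hc.trans hc', .trans _ _ _ h (hc ▸ h')⟩ }

theorem exists_setoid_of_cover_walkRel_bounded {ι : Type*} [Fintype ι] {U : ι → Set X}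
    (hU : ⋃ i, U i = univ) {r : ℝ≥0∞} {R : ι → ℝ≥0}
    (hR : ∀ i x y, walkRel (U i) (2 * r) x y → edist x y ≤ R i) :
    ∃ E : Setoid X, (∃ R : ℝ≥0, ∀ x y, E.r x y → edist x y ≤ R) ∧
      ∀ x, ∃ s : Finset X, s.card ≤ Fintype.card ι ∧ ∀ y, edist x y ≤ r → ∃ z ∈ s, E.r y z := by
  choose c hc using fun x => mem_iUnion.1 (hU ▸ mem_univ x)
  refine ⟨colorWalkSetoid U c (2 * r), ⟨Finset.univ.sup R, fun x y ⟨_, h⟩ => ?_⟩, fun x => ?_⟩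
  · exact (hR _ x y h).trans (by exact_mod_cast Finset.le_sup (Finset.mem_univ _))
  have : Nonempty X := ⟨x⟩
  obtain ⟨s, hs, hrep⟩ := exists_finset_card_le_forall_exists_eq c (closedEBall x r)
  refine ⟨s, hs, fun y hy => ?_⟩
  obtain ⟨z, hz, hzx, hcz⟩ := hrep y (mem_closedEBall'.2 hy)
  refine ⟨z, hz, hcz.symm, .rel _ _ ⟨hc y, hcz ▸ hc z, ?_⟩⟩
  calc edist y z ≤ edist y x + edist x z := edist_triangle y x z
    _ ≤ r + r := add_le_add (edist_comm x y ▸ hy) (mem_closedEBall'.1 hzx)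
    _ = 2 * r := (two_mul r).symm

end

/-- Equivalence of the two definitions of (standard) asymptotic dimension `≤ d`
for an extended metric space. -/
theorem stmt0 {X : Type*} [EMetricSpace X] (d : ℕ) :
    (∀ r : ℝ≥0, 0 < r →
      ∃ E : Setoid X,
        (∃ R : ℝ≥0, ∀ x y : X, E.r x y → edist x y ≤ (R : ℝ≥0∞)) ∧
        ∀ x : X, ∃ s : Finset X, s.card ≤ d + 1 ∧
          ∀ y : X, edist x y ≤ (r : ℝ≥0∞) → ∃ z ∈ s, E.r y z)
    ↔
    (∀ r : ℝ≥0, 0 < r →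
      ∃ U : Fin (d + 1) → Set X, (⋃ i, U i) = Set.univ ∧
        ∀ i, ∃ R : ℝ≥0, ∀ x y : X,
          walkRel (U i) (r : ℝ≥0∞) x y → edist x y ≤ (R : ℝ≥0∞)) := by
  constructor
  · intro h r _
    obtain ⟨E, ⟨R, hR⟩, hball⟩ := h ((d + 1) * r) (by positivity)
    obtain ⟨U, hcover, hU⟩ := exists_cover_walkRel_bounded_of_setoid E hR (r := r) fun x => by
      obtain ⟨s, hs, hsE⟩ := hball x
      exact (encard_ballClasses_le (by simpa using hsE)).trans (by exact_mod_cast hs)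
    exact ⟨U, hcover, fun i => ⟨_, hU i⟩⟩
  · intro h r _
    obtain ⟨U, hcover, hU⟩ := h (2 * r) (by positivity)
    choose R hR using hU
    simpa using exists_setoid_of_cover_walkRel_bounded hcover (r := r) (R := R) (by simpa using hR)
end

section
/- Let G be a finitely generated group with polynomial volume-growth of degree d, and let B be a finite symmetric generating set containing the identity. Then for every m ≥ 1 and every r_0 > 0 there exists r ≥ r_0 such that |B^{rm}| ≤ 2 m^d |B^r|. -/
open scoped Pointwise

/-! If `|B^{rm}| > 2 m^d |B^r|` held for all `r ≥ r₀`, then the normalized volume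
`|B^r| / r^d` would at least double along `r₀, r₀ m, r₀ m², …`, hence grow like `2^k`,
contradicting the bound `|B^r| / r^d ≤ c` given by polynomial growth. -/

theorem pow_mul_le_apply_mul_pow {g : ℕ → ℝ} {a : ℝ} {m r₀ : ℕ} (ha : 0 ≤ a) (hm : 1 ≤ m)
    (hg : ∀ r, r₀ ≤ r → a * g r ≤ g (r * m)) (k : ℕ) :
    a ^ k * g r₀ ≤ g (r₀ * m ^ k) := by
  induction k with
  | zero => simp
  | succ k ih =>
    calc a ^ (k + 1) * g r₀ = a * (a ^ k * g r₀) := by ring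
      _ ≤ a * g (r₀ * m ^ k) := mul_le_mul_of_nonneg_left ih ha
      _ ≤ g (r₀ * m ^ k * m) := hg _ (Nat.le_mul_of_pos_right _ (Nat.pow_pos hm))
      _ = g (r₀ * m ^ (k + 1)) := by rw [pow_succ, mul_assoc]

theorem exists_apply_mul_le_two_mul_pow_mul {f : ℕ → ℝ} {c : ℝ} {d m r₀ : ℕ}
    (hm : 1 ≤ m) (hr₀ : 0 < r₀) (hf : 0 < f r₀)
    (hgrowth : ∀ r, 1 ≤ r → f r ≤ c * r ^ d) :
    ∃ r, r₀ ≤ r ∧ f (r * m) ≤ 2 * m ^ d * f r := by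
  by_contra! hcon
  set q : ℕ → ℝ := fun r => f r / r ^ d with hq
  have hc : 0 ≤ c := (pos_of_mul_pos_left (hf.trans_le (hgrowth r₀ hr₀)) (by positivity)).le
  have hq_le : ∀ r, 1 ≤ r → q r ≤ c := fun r hr =>
    div_le_of_le_mul₀ (by positivity) hc (hgrowth r hr)
  have hq_double : ∀ r, r₀ ≤ r → 2 * q r ≤ q (r * m) := by
    intro r hr
    have hrd : (0 : ℝ) < (r : ℝ) ^ d := by
      have : (0 : ℝ) < r := by exact_mod_cast hr₀.trans_le hr
      positivity
    have hmd : (0 : ℝ) < (m : ℝ) ^ d := by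
      have : (0 : ℝ) < m := by exact_mod_cast hm
      positivity
    calc 2 * q r = 2 * (m : ℝ) ^ d * f r / ((r : ℝ) ^ d * (m : ℝ) ^ d) := by
          simp only [hq]; field_simp
      _ ≤ f (r * m) / ((r : ℝ) ^ d * (m : ℝ) ^ d) := by
          gcongr; exact (hcon r hr).le
      _ = q (r * m) := by simp only [hq]; push_cast; rw [mul_pow]
  have hq₀ : 0 < q r₀ := div_pos hf (pow_pos (by exact_mod_cast hr₀) d)
  obtain ⟨k, hk⟩ := pow_unbounded_of_one_lt (c / q r₀) (by norm_num : (1 : ℝ) < 2)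
  have hbound : 2 ^ k * q r₀ ≤ c :=
    (pow_mul_le_apply_mul_pow (by norm_num) hm hq_double k).trans
      (hq_le _ (Nat.one_le_iff_ne_zero.mpr (by positivity)))
  exact absurd ((div_lt_iff₀ hq₀).mp hk) (not_lt.mpr hbound)

theorem stmt1_general {G : Type*} [Group G] [DecidableEq G]
    (B : Finset G) (hB1 : (1 : G) ∈ B)
    (d : ℕ) (c : ℝ)
    (hgrowth : ∀ r : ℕ, 1 ≤ r → ((B ^ r).card : ℝ) ≤ c * (r : ℝ) ^ d) :
    ∀ m : ℕ, 1 ≤ m → ∀ r₀ : ℕ, 0 < r₀ → ∃ r : ℕ, r₀ ≤ r ∧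
      ((B ^ (r * m)).card : ℝ) ≤ 2 * (m : ℝ) ^ d * ((B ^ r).card : ℝ) := fun m hm r₀ hr₀ =>
  exists_apply_mul_le_two_mul_pow_mul (f := fun r => ((B ^ r).card : ℝ)) hm hr₀
    (by exact_mod_cast Finset.card_pos.mpr ⟨1, Finset.one_mem_pow hB1⟩) hgrowth

/-- For a finitely generated group of polynomial volume-growth of degree `d`,
for every `m ≥ 1` and `r₀ > 0` there is `r ≥ r₀` with `|B^{rm}| ≤ 2 m^d |B^r|`. -/
theorem stmt1 {G : Type*} [Group G] [DecidableEq G]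
    (B : Finset G) (hB1 : (1 : G) ∈ B) (hBsymm : B⁻¹ = B)
    (hgen : Subgroup.closure (B : Set G) = ⊤)
    (d : ℕ) (c : ℝ) (hc : 0 < c)
    (hgrowth : ∀ r : ℕ, 1 ≤ r → ((B ^ r).card : ℝ) ≤ c * (r : ℝ) ^ d) :
    ∀ m : ℕ, 1 ≤ m → ∀ r₀ : ℕ, 0 < r₀ → ∃ r : ℕ, r₀ ≤ r ∧
      ((B ^ (r * m)).card : ℝ) ≤ 2 * (m : ℝ) ^ d * ((B ^ r).card : ℝ) :=
  stmt1_general B hB1 d c hgrowth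
end

section
/- Let G be a finitely generated group with polynomial volume-growth of degree d, let B be a finite symmetric generating set containing 1_G, and let G act on a set X. Equip X with the extended metric ρ where ρ(x,y) is the least word length (with respect to B) of a group element sending x to y, and +∞ if no such element exists. Then for every t > 1 and r_0 > 0 there is r ≥ r_0 such that for every x ∈ X, the ball B(x; rt) contains at most 2(t+1)^d pairwise disjoint balls of radius r. -/
/-!
Put `φ(n) = n + ⌈n t⌉`. If `|B^{φ(n)}| > 2(t+1)^d |B^n|` held for all large `n`, iterating `φ`
from `n₀` would give radii `nₖ ≤ (n₀+1)(t+1)^k` with `|B^{nₖ}| ≥ (2(t+1)^d)^k`, against the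
polynomial bound `|B^{nₖ}| ≤ c (n₀+1)^d (t+1)^{dk}`. So some `n ≥ n₀` has a good ratio, and we
take `r = n`. If disjoint balls `B(yᵢ; n)` lie in `B(x; nt)`, then `yᵢ = gᵢ • x` with
`gᵢ ∈ B^{⌈nt⌉}`, and the translates `B^n gᵢ` are disjoint subsets of `B^{φ(n)}`.
-/

open scoped Pointwise ENNReal

noncomputable def dilateStep (t : ℝ) (n : ℕ) : ℕ := n + ⌈n * t⌉₊

lemma le_dilateStep_iterate (t : ℝ) (n₀ k : ℕ) : n₀ ≤ (dilateStep t)^[k] n₀ :=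
  Function.id_le_iterate_of_id_le (fun _ => Nat.le_add_right _ _) k n₀

lemma dilateStep_iterate_add_one_le {t : ℝ} (ht : 1 ≤ t) (n₀ k : ℕ) :
    ((dilateStep t)^[k] n₀ : ℝ) + 1 ≤ (n₀ + 1) * (t + 1) ^ k := by
  induction k with
  | zero => simp
  | succ k ih =>
    rw [Function.iterate_succ_apply']
    set n := (dilateStep t)^[k] n₀
    have hceil : (⌈(n : ℝ) * t⌉₊ : ℝ) < n * t + 1 := Nat.ceil_lt_add_one (by positivity)
    calc ((dilateStep t n : ℕ) : ℝ) + 1 = n + ⌈(n : ℝ) * t⌉₊ + 1 := by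
          simp only [dilateStep, Nat.cast_add]
      _ ≤ (n + 1) * (t + 1) := by nlinarith
      _ ≤ (n₀ + 1) * (t + 1) ^ k * (t + 1) := by gcongr
      _ = (n₀ + 1) * (t + 1) ^ (k + 1) := by ring

lemma exists_apply_dilateStep_le_of_le_mul_pow (v : ℕ → ℝ) (hv : ∀ n, 0 < v n) (c : ℝ) (d : ℕ)
    (hub : ∀ n : ℕ, 1 ≤ n → v n ≤ c * (n : ℝ) ^ d) {t : ℝ} (ht : 1 ≤ t) {n₀ : ℕ} (hn₀ : 1 ≤ n₀) :
    ∃ n, n₀ ≤ n ∧ v (dilateStep t n) ≤ 2 * (t + 1) ^ d * v n := by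
  by_contra! hgrow
  set a : ℕ → ℕ := fun k => (dilateStep t)^[k] n₀
  have hc : 0 < c := pos_of_mul_pos_left ((hv n₀).trans_le (hub n₀ hn₀)) (by positivity)
  have hlow : ∀ k, (2 * (t + 1) ^ d) ^ k * v n₀ ≤ v (a k) := by
    intro k
    induction k with
    | zero => simp [a]
    | succ k ih =>
      have hstep := hgrow (a k) (le_dilateStep_iterate t n₀ k)
      calc (2 * (t + 1) ^ d) ^ (k + 1) * v n₀ = 2 * (t + 1) ^ d * ((2 * (t + 1) ^ d) ^ k * v n₀) := by
            ring
        _ ≤ 2 * (t + 1) ^ d * v (a k) := by gcongr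
        _ ≤ v (a (k + 1)) := by
            simpa only [a, Function.iterate_succ_apply'] using hstep.le
  have hup : ∀ k, v (a k) ≤ c * (n₀ + 1) ^ d * ((t + 1) ^ d) ^ k := by
    intro k
    calc v (a k) ≤ c * (a k : ℝ) ^ d := hub _ (hn₀.trans (le_dilateStep_iterate t n₀ k))
      _ ≤ c * ((n₀ + 1) * (t + 1) ^ k) ^ d := by
          gcongr; linarith [dilateStep_iterate_add_one_le ht n₀ k]
      _ = c * (n₀ + 1) ^ d * ((t + 1) ^ d) ^ k := by rw [mul_pow, ← pow_mul, pow_mul']; ring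
  obtain ⟨K, hK⟩ := pow_unbounded_of_one_lt (c * (n₀ + 1) ^ d / v n₀) one_lt_two
  have hKle : (2 : ℝ) ^ K * v n₀ * ((t + 1) ^ d) ^ K ≤ c * (n₀ + 1) ^ d * ((t + 1) ^ d) ^ K := by
    calc (2 : ℝ) ^ K * v n₀ * ((t + 1) ^ d) ^ K = (2 * (t + 1) ^ d) ^ K * v n₀ := by ring
      _ ≤ c * (n₀ + 1) ^ d * ((t + 1) ^ d) ^ K := (hlow K).trans (hup K)
  have hK' := le_of_mul_le_mul_right hKle (by positivity)
  rw [div_lt_iff₀ (hv n₀)] at hK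
  linarith

lemma card_mul_card_le_card_mul {G X : Type*} [Group G] [DecidableEq G] [MulAction G X]
    {A C : Finset G} {x : X} {s : Finset X} (hreach : ∀ y ∈ s, ∃ g ∈ C, g • x = y)
    (hdisj : ∀ y₁ ∈ s, ∀ y₂ ∈ s, ∀ a ∈ A, ∀ b ∈ A, a • y₁ = b • y₂ → y₁ = y₂) :
    s.card * A.card ≤ (A * C).card := by
  choose! g hgC hgx using hreach
  rw [← Finset.card_product]
  refine Finset.card_le_card_of_injOn (fun p => p.2 * g p.1) ?_ ?_
  · rintro ⟨y, a⟩ hp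
    rw [Finset.mem_coe, Finset.mem_product] at hp
    exact Finset.mul_mem_mul hp.2 (hgC y hp.1)
  · rintro ⟨y₁, a⟩ hp₁ ⟨y₂, b⟩ hp₂ (hab : a * g y₁ = b * g y₂)
    rw [Finset.mem_coe, Finset.mem_product] at hp₁ hp₂
    have hy : y₁ = y₂ := hdisj y₁ hp₁.1 y₂ hp₂.1 a hp₁.2 b hp₂.2 <| by
      rw [← hgx y₁ hp₁.1, ← hgx y₂ hp₂.1, smul_smul, smul_smul, hab]
    subst hy
    simpa using hab

section wordDist

variable {G X : Type*} [Group G] [DecidableEq G] [MulAction G X] (B : Finset G)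

noncomputable def wordDist (x y : X) : ℝ≥0∞ :=
  ⨅ (n : ℕ) (_ : ∃ g ∈ B ^ n, g • x = y), (n : ℝ≥0∞)

variable {B}

lemma wordDist_le_of_smul_eq {x y : X} {g : G} {n : ℕ} (hg : g ∈ B ^ n) (hgxy : g • x = y) :
    wordDist B x y ≤ n :=
  iInf₂_le n ⟨g, hg, hgxy⟩

lemma wordDist_self (x : X) : wordDist B x x = 0 :=
  nonpos_iff_eq_zero.mp <| by
    simpa using wordDist_le_of_smul_eq (B := B) (n := 0) (by simp) (one_smul G x)

lemma exists_mem_pow_smul_eq_of_wordDist_le (hB1 : (1 : G) ∈ B) {x y : X} {R : ℝ}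
    (h : wordDist B x y ≤ ENNReal.ofReal R) : ∃ g ∈ B ^ ⌈R⌉₊, g • x = y := by
  have hlt : wordDist B x y < ((⌈R⌉₊ + 1 : ℕ) : ℝ≥0∞) :=
    calc wordDist B x y ≤ ENNReal.ofReal R := h
      _ ≤ (⌈R⌉₊ : ℝ≥0∞) := by simpa using ENNReal.ofReal_le_ofReal (Nat.le_ceil R)
      _ < ((⌈R⌉₊ + 1 : ℕ) : ℝ≥0∞) := by exact_mod_cast Nat.lt_succ_self _
  simp only [wordDist, iInf_lt_iff] at hlt
  obtain ⟨m, ⟨g, hg, hgxy⟩, hm⟩ := hlt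
  have hmR : m ≤ ⌈R⌉₊ := Nat.lt_succ_iff.mp (by exact_mod_cast hm)
  exact ⟨g, Finset.pow_subset_pow_right hB1 hmR hg, hgxy⟩

end wordDist

theorem stmt2_general {G X : Type*} [Group G] [DecidableEq G] [MulAction G X]
    (B : Finset G) (hB1 : (1 : G) ∈ B)
    (d : ℕ) (c : ℝ)
    (hgrowth : ∀ r : ℕ, 1 ≤ r → ((B ^ r).card : ℝ) ≤ c * (r : ℝ) ^ d)
    (ρ : X → X → ℝ≥0∞)
    (hρ : ∀ x y : X, ρ x y = ⨅ (n : ℕ) (_ : ∃ g ∈ B ^ n, g • x = y), (n : ℝ≥0∞)) :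
    ∀ t : ℝ, 1 < t → ∀ r₀ : ℝ, 0 < r₀ → ∃ r : ℝ, r₀ ≤ r ∧
      ∀ (x : X) (s : Finset X),
        -- each ball of radius `r` centered in `s` is contained in `B(x; rt)`
        (∀ y ∈ s, ∀ z : X, ρ y z ≤ ENNReal.ofReal r → ρ x z ≤ ENNReal.ofReal (r * t)) →
        -- the balls of radius `r` centered at points of `s` are pairwise disjoint
        (∀ y₁ ∈ s, ∀ y₂ ∈ s, y₁ ≠ y₂ →
          ∀ z : X, ¬(ρ y₁ z ≤ ENNReal.ofReal r ∧ ρ y₂ z ≤ ENNReal.ofReal r)) →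
        (s.card : ℝ) ≤ 2 * (t + 1) ^ d := by
  obtain rfl : ρ = wordDist B := funext₂ hρ
  intro t ht r₀ _
  have hcard_pos : ∀ n, (0 : ℝ) < (B ^ n).card := fun n => by
    exact_mod_cast (Finset.card_pos.mpr ⟨1, Finset.one_mem_pow hB1⟩)
  obtain ⟨n, hn, hratio⟩ := exists_apply_dilateStep_le_of_le_mul_pow _ hcard_pos c d hgrowth
    ht.le (le_max_right ⌈r₀⌉₊ 1)
  refine ⟨n, (Nat.le_ceil r₀).trans (by exact_mod_cast (le_max_left _ _).trans hn), ?_⟩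
  intro x s hsub hdisj
  have hreach : ∀ y ∈ s, ∃ g ∈ B ^ ⌈n * t⌉₊, g • x = y := fun y hy =>
    exists_mem_pow_smul_eq_of_wordDist_le hB1 (hsub y hy y (by simp [wordDist_self]))
  have horbits : ∀ y₁ ∈ s, ∀ y₂ ∈ s, ∀ a ∈ B ^ n, ∀ b ∈ B ^ n, a • y₁ = b • y₂ → y₁ = y₂ := by
    intro y₁ hy₁ y₂ hy₂ a ha b hb hab
    by_contra hne
    refine hdisj y₁ hy₁ y₂ hy₂ hne (a • y₁) ⟨?_, ?_⟩ <;> rw [ENNReal.ofReal_natCast]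
    exacts [wordDist_le_of_smul_eq ha rfl, wordDist_le_of_smul_eq hb hab.symm]
  have hcount := card_mul_card_le_card_mul hreach horbits
  rw [← pow_add] at hcount
  have hbound : (s.card : ℝ) * (B ^ n).card ≤ 2 * (t + 1) ^ d * (B ^ n).card :=
    (by exact_mod_cast hcount : (s.card : ℝ) * _ ≤ _).trans hratio
  exact le_of_mul_le_mul_right hbound (hcard_pos n)

/-- Bounded packing for actions of groups of polynomial volume-growth:
for every `t > 1` and `r₀ > 0` there is `r ≥ r₀` so that every ball of radius `rt`
contains at most `2(t+1)^d` pairwise disjoint balls of radius `r`. -/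
theorem stmt2 {G X : Type*} [Group G] [DecidableEq G] [MulAction G X]
    (B : Finset G) (hB1 : (1 : G) ∈ B) (hBsymm : B⁻¹ = B)
    (hgen : Subgroup.closure (B : Set G) = ⊤)
    (d : ℕ) (c : ℝ) (hc : 0 < c)
    (hgrowth : ∀ r : ℕ, 1 ≤ r → ((B ^ r).card : ℝ) ≤ c * (r : ℝ) ^ d)
    (ρ : X → X → ℝ≥0∞)
    (hρ : ∀ x y : X, ρ x y = ⨅ (n : ℕ) (_ : ∃ g ∈ B ^ n, g • x = y), (n : ℝ≥0∞)) :
    ∀ t : ℝ, 1 < t → ∀ r₀ : ℝ, 0 < r₀ → ∃ r : ℝ, r₀ ≤ r ∧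
      ∀ (x : X) (s : Finset X),
        -- each ball of radius `r` centered in `s` is contained in `B(x; rt)`
        (∀ y ∈ s, ∀ z : X, ρ y z ≤ ENNReal.ofReal r → ρ x z ≤ ENNReal.ofReal (r * t)) →
        -- the balls of radius `r` centered at points of `s` are pairwise disjoint
        (∀ y₁ ∈ s, ∀ y₂ ∈ s, y₁ ≠ y₂ →
          ∀ z : X, ¬(ρ y₁ z ≤ ENNReal.ofReal r ∧ ρ y₂ z ≤ ENNReal.ofReal r)) →
        (s.card : ℝ) ≤ 2 * (t + 1) ^ d :=
  stmt2_general B hB1 d c hgrowth ρ hρ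
end

section
/- Let G = ⊕_{n ∈ ℤ} ℤ/2ℤ and let Φ be a finite set of automorphisms of G, each of which shifts the ℤ-coordinates by some integer. Then G has Φ-bounded packing: if each φ ∈ Φ shifts coordinates by at most s units, then k = 2^{2s} works, witnessed for each finite B_0 by B = F_m = ⊕_{n=-m}^{m} ℤ/2ℤ for any m ≥ s with B_0 ⊆ F_m. -/
/-- The interval subgroup `F_m = ⊕_{n=-m}^{m} ℤ/2ℤ` of `⊕_{n ∈ ℤ} ℤ/2ℤ`, as a set. -/
def Fset (m : ℕ) : Set (Π₀ _ : ℤ, ZMod 2) :=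
  {x | ∀ n : ℤ, x n ≠ 0 → -(m : ℤ) ≤ n ∧ n ≤ (m : ℤ)}

/-- `⊕_{n ∈ ℤ} ℤ/2ℤ` has `Φ`-bounded packing for any finite set `Φ` of shift
automorphisms, with constant `k = 2^{2s}` witnessed by `B = F_m` whenever `m ≥ s`
and `B₀ ⊆ F_m`. -/
theorem stmt4 (Φ : Set ((Π₀ _ : ℤ, ZMod 2) ≃+ (Π₀ _ : ℤ, ZMod 2))) (hΦfin : Φ.Finite)
    (s : ℕ)
    (hshift : ∀ φ ∈ Φ, ∃ t : ℤ, t.natAbs ≤ s ∧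
      ∀ (x : Π₀ _ : ℤ, ZMod 2) (n : ℤ), φ x n = x (n - t)) :
    ∀ (B₀ : Finset (Π₀ _ : ℤ, ZMod 2)) (m : ℕ), s ≤ m → ↑B₀ ⊆ Fset m →
      ∀ φ ∈ Φ, ∀ T : Finset (Π₀ _ : ℤ, ZMod 2),
        -- T ⊆ B³ + φ(B³) with B = F_m
        (∀ t ∈ T, ∃ x₁ ∈ Fset m, ∃ x₂ ∈ Fset m, ∃ x₃ ∈ Fset m,
          ∃ y₁ ∈ Fset m, ∃ y₂ ∈ Fset m, ∃ y₃ ∈ Fset m,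
            t = x₁ + x₂ + x₃ + φ (y₁ + y₂ + y₃)) →
        -- (T − T) \ {0} is disjoint from B = F_m
        (∀ t₁ ∈ T, ∀ t₂ ∈ T, t₁ - t₂ ≠ 0 → t₁ - t₂ ∉ Fset m) →
        T.card ≤ 2 ^ (2 * s) := by
  intro B₀ m hsm hB₀ φ hφ T hTsub hTsep
  obtain ⟨τ, hτ, hτeq⟩ := hshift φ hφ
  set S : Finset ℤ :=
    Finset.Icc (-((m : ℤ) + s)) (-(m : ℤ) - 1) ∪ Finset.Icc ((m : ℤ) + 1) ((m : ℤ) + s)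
    with hS
  -- support bound for elements of T
  have hsupp : ∀ t ∈ T, ∀ n : ℤ, t n ≠ 0 → -((m : ℤ) + s) ≤ n ∧ n ≤ (m : ℤ) + s := by
    intro t ht n hn
    obtain ⟨x₁, hx₁, x₂, hx₂, x₃, hx₃, y₁, hy₁, y₂, hy₂, y₃, hy₃, rfl⟩ := hTsub t ht
    simp only [DFinsupp.add_apply, hτeq] at hn
    by_contra hcon
    have h1 : x₁ n = 0 := by
      by_contra h; exact hcon (by have := hx₁ n h; omega)
    have h2 : x₂ n = 0 := by
      by_contra h; exact hcon (by have := hx₂ n h; omega)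
    have h3 : x₃ n = 0 := by
      by_contra h; exact hcon (by have := hx₃ n h; omega)
    have h4a : y₁ (n - τ) = 0 := by
      by_contra h; exact hcon (by have := hy₁ _ h; omega)
    have h4b : y₂ (n - τ) = 0 := by
      by_contra h; exact hcon (by have := hy₂ _ h; omega)
    have h4c : y₃ (n - τ) = 0 := by
      by_contra h; exact hcon (by have := hy₃ _ h; omega)
    rw [h1, h2, h3, h4a, h4b, h4c] at hn
    simp at hn
  -- injection into functions S → ZMod 2
  have key : Set.InjOn (fun t : (Π₀ _ : ℤ, ZMod 2) => fun n : S => t (n : ℤ)) ↑T := by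
    intro t₁ ht₁ t₂ ht₂ heq
    by_contra hne
    have hdne : t₁ - t₂ ≠ 0 := sub_ne_zero.mpr hne
    refine hTsep t₁ ht₁ t₂ ht₂ hdne ?_
    intro n hn
    have hsub : t₁ n ≠ t₂ n := by
      simpa [sub_ne_zero] using hn
    by_contra hcon
    -- n is outside [-m, m]
    have hn1 : t₁ n ≠ 0 ∨ t₂ n ≠ 0 := by
      by_contra h
      push_neg at h
      exact hsub (h.1.trans h.2.symm)
    have hbd : -((m : ℤ) + s) ≤ n ∧ n ≤ (m : ℤ) + s := by
      rcases hn1 with h | h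
      · exact hsupp t₁ ht₁ n h
      · exact hsupp t₂ ht₂ n h
    have hnS : n ∈ S := by
      simp only [hS, Finset.mem_union, Finset.mem_Icc]
      omega
    have := congrFun heq ⟨n, hnS⟩
    exact hsub this
  have hcard : T.card ≤ Fintype.card (S → ZMod 2) := by
    classical
    have := Finset.card_le_card_of_injOn
      (fun t : (Π₀ _ : ℤ, ZMod 2) => fun n : S => t (n : ℤ))
      (fun t _ => Finset.mem_univ _) key
    simpa using this
  have hScard : S.card = 2 * s := by
    rw [hS, Finset.card_union_of_disjoint, Int.card_Icc, Int.card_Icc]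
    · omega
    · rw [Finset.disjoint_left]
      intro a ha hb
      simp only [Finset.mem_Icc] at ha hb
      omega
  calc T.card ≤ Fintype.card (S → ZMod 2) := hcard
    _ = 2 ^ (2 * s) := by
        rw [Fintype.card_fun]
        simp [hScard]
end

section
/- Let G be a countable torsion-free abelian group, let Φ be a finite set of automorphisms of G, let G_0 ≤ G be a subgroup generated by a finite symmetric set A containing 0, and suppose the subgroup G_1 generated by G_0 together with φ(G_0) for all φ ∈ Φ satisfies G_0 + Δ = G_1 for a finite set Δ containing 0. If λ ∈ ℕ satisfies (⋃_{φ∈Φ} (Δ + φ(A) − Δ)) ∩ G_0 ⊆ λ·A (the set of sums of at most λ elements of A), then φ(r·A) ⊆ (rλ)·A + Δ for every φ ∈ Φ and r ∈ ℕ, where r·A denotes the set of sums of at most r elements of A. -/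
open scoped Pointwise

/-!
Write `G₀ = ⟨A⟩` and `G₁ = G₀ + Δ`. For `d ∈ Δ` and `a ∈ A`, the element `d + φ a` lies in
`G₁`, so `d + φ a = g + d'` with `g ∈ G₀` and `d' ∈ Δ`; then `g = d + φ a - d'` lies in
`(Δ + φ(A) - Δ) ∩ G₀ ⊆ λ·A`. Hence `Δ + φ(A) ⊆ λ·A + Δ`, and applying this once for every
summand of an element of `r·A` pushes the error term `Δ` through `φ(r·A)`.
-/

/-- Sums of (at most) `n` elements of `A` (since `0 ∈ A`). -/
def iterSum {G : Type*} [AddCommGroup G] [DecidableEq G] (A : Finset G) : ℕ → Finset G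
  | 0 => {0}
  | n + 1 => iterSum A n + A

section IterSum

variable {G : Type*} [AddCommGroup G] [DecidableEq G]

theorem iterSum_add (A : Finset G) (m n : ℕ) :
    iterSum A (m + n) = iterSum A m + iterSum A n := by
  induction n with
  | zero => exact (add_zero (iterSum A m)).symm
  | succ n ih => rw [← add_assoc, iterSum, ih, iterSum, add_assoc]

theorem image_iterSum_subset_iterSum_mul_add {H : Type*} [AddCommGroup H] [DecidableEq H]
    (f : G →+ H) {A : Finset G} {B : Finset H} {Δ : Set H} {lam : ℕ} (hΔ0 : (0 : H) ∈ Δ)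
    (hstep : Δ + f '' A ⊆ ↑(iterSum B lam) + Δ) :
    ∀ r : ℕ, f '' ↑(iterSum A r) ⊆ ↑(iterSum B (r * lam)) + Δ
  | 0 => by simpa [iterSum] using hΔ0
  | r + 1 => by
    calc f '' ↑(iterSum A (r + 1))
        = f '' ↑(iterSum A r) + f '' A := by rw [iterSum, Finset.coe_add, Set.image_add]
      _ ⊆ ↑(iterSum B (r * lam)) + Δ + f '' A :=
          Set.add_subset_add_right (image_iterSum_subset_iterSum_mul_add f hΔ0 hstep r)
      _ ⊆ ↑(iterSum B (r * lam)) + (↑(iterSum B lam) + Δ) := by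
          rw [add_assoc]; exact Set.add_subset_add_left hstep
      _ = ↑(iterSum B ((r + 1) * lam)) + Δ := by
          rw [← add_assoc, add_one_mul, iterSum_add, Finset.coe_add]

end IterSum

theorem Set.subset_add_of_sub_inter_subset {G : Type*} [AddCommGroup G] {X Δ H S : Set G}
    (hX : X ⊆ H + Δ) (hS : (X - Δ) ∩ H ⊆ S) : X ⊆ S + Δ := by
  intro x hx
  obtain ⟨h, hh, d, hd, rfl⟩ := hX hx
  exact ⟨h, hS ⟨⟨h + d, hx, d, hd, add_sub_cancel_right h d⟩, hh⟩, d, hd, rfl⟩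

theorem add_image_subset_closure_union_image {G : Type*} [AddCommGroup G]
    {Φ : Set (G ≃+ G)} {φ : G ≃+ G} (hφ : φ ∈ Φ) (H : AddSubgroup G) {A Δ : Set G}
    (hA : A ⊆ H) (hΔ : Δ ⊆ AddSubgroup.closure ((H : Set G) ∪ ⋃ ψ ∈ Φ, ⇑ψ '' H)) :
    Δ + ⇑φ '' A ⊆ AddSubgroup.closure ((H : Set G) ∪ ⋃ ψ ∈ Φ, ⇑ψ '' H) := by
  rintro _ ⟨d, hd, _, ⟨a, ha, rfl⟩, rfl⟩
  refine add_mem (hΔ hd) (AddSubgroup.subset_closure (Or.inr ?_))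
  exact Set.mem_biUnion hφ ⟨a, hA ha, rfl⟩

theorem stmt6_general {G : Type*} [AddCommGroup G] [DecidableEq G]
    (Φ : Set (G ≃+ G))
    (A : Finset G)
    (Δ : Finset G) (hΔ0 : (0 : G) ∈ Δ)
    (hΔ : ((AddSubgroup.closure (A : Set G) : Set G) + (Δ : Set G)) =
      (AddSubgroup.closure ((AddSubgroup.closure (A : Set G) : Set G) ∪
        ⋃ φ ∈ Φ, ⇑φ '' (AddSubgroup.closure (A : Set G) : Set G)) : Set G))
    (lam : ℕ)
    (hlam : (⋃ φ ∈ Φ, ((Δ : Set G) + ⇑φ '' (A : Set G) - (Δ : Set G))) ∩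
        (AddSubgroup.closure (A : Set G) : Set G) ⊆ ↑(iterSum A lam)) :
    ∀ φ ∈ Φ, ∀ r : ℕ,
      ⇑φ '' ↑(iterSum A r) ⊆ ↑(iterSum A (r * lam)) + (Δ : Set G) := by
  intro φ hφ
  set G₀ := AddSubgroup.closure (A : Set G)
  have hΔG₁ : (Δ : Set G) ⊆ (G₀ : Set G) + Δ := Set.subset_add_right _ G₀.zero_mem
  have hstep : (Δ : Set G) + ⇑φ '' A ⊆ (G₀ : Set G) + Δ := by
    rw [hΔ] at hΔG₁ ⊢
    exact add_image_subset_closure_union_image hφ G₀ AddSubgroup.subset_closure hΔG₁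
  exact image_iterSum_subset_iterSum_mul_add φ.toAddMonoidHom hΔ0
    (Set.subset_add_of_sub_inter_subset hstep
      ((Set.inter_subset_inter_left _ (Set.subset_biUnion_of_mem hφ)).trans hlam))

/-- If `λ·A` absorbs `(Δ + φ(A) − Δ) ∩ G₀` for all `φ ∈ Φ`, then
`φ(r·A) ⊆ (rλ)·A + Δ` for every `φ ∈ Φ` and `r ∈ ℕ`. -/
theorem stmt6 {G : Type*} [AddCommGroup G] [Countable G] [DecidableEq G]
    (htf : ∀ (g : G) (n : ℕ), n ≠ 0 → n • g = 0 → g = 0)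
    (Φ : Set (G ≃+ G)) (hΦfin : Φ.Finite)
    (A : Finset G) (hA0 : (0 : G) ∈ A) (hAsymm : -A = A)
    (Δ : Finset G) (hΔ0 : (0 : G) ∈ Δ)
    (hΔ : ((AddSubgroup.closure (A : Set G) : Set G) + (Δ : Set G)) =
      (AddSubgroup.closure ((AddSubgroup.closure (A : Set G) : Set G) ∪
        ⋃ φ ∈ Φ, ⇑φ '' (AddSubgroup.closure (A : Set G) : Set G)) : Set G))
    (lam : ℕ)
    (hlam : (⋃ φ ∈ Φ, ((Δ : Set G) + ⇑φ '' (A : Set G) - (Δ : Set G))) ∩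
        (AddSubgroup.closure (A : Set G) : Set G) ⊆ ↑(iterSum A lam)) :
    ∀ φ ∈ Φ, ∀ r : ℕ,
      ⇑φ '' ↑(iterSum A r) ⊆ ↑(iterSum A (r * lam)) + (Δ : Set G) :=
  stmt6_general Φ A Δ hΔ0 hΔ lam hlam
end

section
/- Let G ⊲ H be countable groups and let C ⊆ H be finite. Assume G has {φ_c : c ∈ C}-bounded packing with constant k, where φ_c(g) = c g c^{-1}. Then for any finite set B_0 ⊆ G there is a finite symmetric set B with B_0 ⊆ B ⊆ G and 1_H ∈ B such that |T| ≤ k|C| whenever T ⊆ B^3 C B^3 satisfies (T T^{-1} \ {1_G}) ∩ B = ∅. -/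
open scoped Pointwise

/-- Bounded packing passes from conjugation automorphisms of a normal subgroup `G ⊴ H`
to the packing property for `B³ C B³`. -/
theorem stmt7 {H : Type*} [Group H] [Countable H] [DecidableEq H]
    (G : Subgroup H) [G.Normal] (C : Finset H) (k : ℕ)
    (hpack : ∀ B₀ : Finset H, ↑B₀ ⊆ (G : Set H) → ∃ B : Finset H,
      ↑B ⊆ (G : Set H) ∧ B₀ ⊆ B ∧ (1 : H) ∈ B ∧ B⁻¹ = B ∧
      ∀ c ∈ C, ∀ S : Finset H, S ⊆ B ^ 3 * (B ^ 3).image (fun g => c * g * c⁻¹) →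
        (∀ s₁ ∈ S, ∀ s₂ ∈ S, s₁ * s₂⁻¹ ≠ 1 → s₁ * s₂⁻¹ ∉ B) → S.card ≤ k) :
    ∀ B₀ : Finset H, ↑B₀ ⊆ (G : Set H) → ∃ B : Finset H,
      ↑B ⊆ (G : Set H) ∧ B₀ ⊆ B ∧ (1 : H) ∈ B ∧ B⁻¹ = B ∧
      ∀ T : Finset H, T ⊆ B ^ 3 * C * B ^ 3 →
        (∀ t₁ ∈ T, ∀ t₂ ∈ T, t₁ * t₂⁻¹ ≠ 1 → t₁ * t₂⁻¹ ∉ B) →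
        T.card ≤ k * C.card := by
  intro B₀ hB₀
  obtain ⟨B, hBG, hB₀B, h1B, hBinv, hB⟩ := hpack B₀ hB₀
  refine ⟨B, hBG, hB₀B, h1B, hBinv, ?_⟩
  intro T hT hsep
  -- split T by which c it uses
  have hsub : T ⊆ C.biUnion (fun c => T.filter (fun t => t ∈ B ^ 3 * {c} * B ^ 3)) := by
    intro t ht
    obtain ⟨a, ha, b, hb, rfl⟩ := Finset.mem_mul.mp (hT ht)
    obtain ⟨x, hx, c, hc, rfl⟩ := Finset.mem_mul.mp ha
    refine Finset.mem_biUnion.mpr ⟨c, hc, Finset.mem_filter.mpr ⟨ht, ?_⟩⟩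
    exact Finset.mul_mem_mul (Finset.mul_mem_mul hx (Finset.mem_singleton_self c)) hb
  calc T.card ≤ (C.biUnion (fun c => T.filter (fun t => t ∈ B ^ 3 * {c} * B ^ 3))).card :=
        Finset.card_le_card hsub
    _ ≤ ∑ c ∈ C, (T.filter (fun t => t ∈ B ^ 3 * {c} * B ^ 3)).card :=
        Finset.card_biUnion_le
    _ ≤ ∑ _c ∈ C, k := by
        refine Finset.sum_le_sum ?_
        intro c hc
        set Tc := T.filter (fun t => t ∈ B ^ 3 * {c} * B ^ 3) with hTc
        have hinj : Set.InjOn (fun t => t * c⁻¹) ↑Tc :=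
          (mul_left_injective c⁻¹).injOn
        have hcard : (Tc.image (fun t => t * c⁻¹)).card = Tc.card :=
          Finset.card_image_of_injOn hinj
        rw [← hcard]
        refine hB c hc _ ?_ ?_
        · intro s hs
          obtain ⟨t, ht, rfl⟩ := Finset.mem_image.mp hs
          obtain ⟨ht', htmem⟩ := Finset.mem_filter.mp ht
          obtain ⟨a, ha, b, hb, rfl⟩ := Finset.mem_mul.mp htmem
          obtain ⟨x, hx, c', hc', rfl⟩ := Finset.mem_mul.mp ha
          rw [Finset.mem_singleton] at hc'
          subst hc'
          have : x * c' * b * c'⁻¹ = x * (c' * b * c'⁻¹) := by group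
          rw [this]
          exact Finset.mul_mem_mul hx (Finset.mem_image.mpr ⟨b, hb, rfl⟩)
        · intro s₁ hs₁ s₂ hs₂
          obtain ⟨t₁, ht₁, rfl⟩ := Finset.mem_image.mp hs₁
          obtain ⟨t₂, ht₂, rfl⟩ := Finset.mem_image.mp hs₂
          have heq : t₁ * c⁻¹ * (t₂ * c⁻¹)⁻¹ = t₁ * t₂⁻¹ := by group
          rw [heq]
          exact hsep t₁ (Finset.mem_filter.mp ht₁).1 t₂ (Finset.mem_filter.mp ht₂).1
    _ = k * C.card := by rw [Finset.sum_const, smul_eq_mul, mul_comm]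
end

section
/- Let (X, ρ) be an extended metric space. Suppose X is the union of two sets X_0 and X_1, where X_0 has (r_0, r_1)-dimension at most d and X_1 has (3r_1, r_2)-dimension at most d, with r_0 ≤ r_1 ≤ r_2. Then X has (r_0, 5r_2)-dimension at most d. -/
open scoped ENNReal

/-- `Y` has `(r, R)`-dimension at most `d`. -/
def hasDim {X : Type*} [EMetricSpace X] (Y : Set X) (r R : ℝ≥0∞) (d : ℕ) : Prop :=
  ∃ U : Fin (d + 1) → Set X, Y ⊆ ⋃ i, U i ∧
    ∀ i, ∀ x y : X, walkRel (U i) r x y → edist x y ≤ R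

section Aux

variable {X : Type*} [EMetricSpace X] (U V : Set X) (r₀ r₁ : ℝ≥0∞)

/-- `x` is anchored to `v ∈ V` via a `U`-walk. -/
def anchorTo (x v : X) : Prop :=
  v ∈ V ∧ (x = v ∨ (x ∈ U ∧ ∃ u ∈ U, walkRel U r₀ x u ∧ edist u v ≤ r₀))

/-- Invariant relation for walks in `U ∪ V`. -/
def invRel (x y : X) : Prop :=
  x = y ∨ (x ∈ U ∧ y ∈ U ∧ walkRel U r₀ x y) ∨
    (∃ v w, anchorTo U V r₀ x v ∧ anchorTo U V r₀ y w ∧ walkRel V (3 * r₁) v w)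

variable {U V r₀ r₁}
variable (h01 : r₀ ≤ r₁)
variable (hU : ∀ x y : X, walkRel U r₀ x y → edist x y ≤ r₁)

lemma walkRel.symm' {W : Set X} {s : ℝ≥0∞} {x y : X} (h : walkRel W s x y) :
    walkRel W s y x := Relation.EqvGen.symm _ _ h

lemma walkRel.trans' {W : Set X} {s : ℝ≥0∞} {x y z : X} (h : walkRel W s x y)
    (h' : walkRel W s y z) : walkRel W s x z := Relation.EqvGen.trans _ _ _ h h'

lemma anchorTo.refl {x : X} (hx : x ∈ V) : anchorTo U V r₀ x x := ⟨hx, Or.inl rfl⟩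

include h01 hU in
/-- Two anchors of the same point are linked in `V`. -/
lemma anchors_link {y w v' : X} (h1 : anchorTo U V r₀ y w) (h2 : anchorTo U V r₀ y v') :
    walkRel V (3 * r₁) w v' := by
  have h3 : r₀ + (r₁ + r₀) ≤ 3 * r₁ := by
    calc r₀ + (r₁ + r₀) ≤ r₁ + (r₁ + r₁) := by gcongr
    _ = 3 * r₁ := by ring
  obtain ⟨hwV, rfl | ⟨hyU, u, huU, hWyu, hdu⟩⟩ := h1
  · obtain ⟨hv'V, rfl | ⟨hyU, u', hu'U, hWyu', hdu'⟩⟩ := h2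
    · exact Relation.EqvGen.refl _
    · refine Relation.EqvGen.rel _ _ ⟨hwV, hv'V, ?_⟩
      calc edist y v' ≤ edist y u' + edist u' v' := edist_triangle _ _ _
      _ ≤ r₁ + r₀ := by gcongr; exact hU _ _ hWyu'
      _ ≤ 3 * r₁ := le_trans (le_add_self) h3
  · obtain ⟨hv'V, rfl | ⟨hyU', u', hu'U, hWyu', hdu'⟩⟩ := h2
    · refine Relation.EqvGen.rel _ _ ⟨hwV, hv'V, ?_⟩
      calc edist w y = edist y w := edist_comm _ _
      _ ≤ edist y u + edist u w := edist_triangle _ _ _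
      _ ≤ r₁ + r₀ := by gcongr; exact hU _ _ hWyu
      _ ≤ 3 * r₁ := le_trans (le_add_self) h3
    · refine Relation.EqvGen.rel _ _ ⟨hwV, hv'V, ?_⟩
      calc edist w v' ≤ edist w u + edist u u' + edist u' v' := edist_triangle4 _ _ _ _
      _ ≤ r₀ + r₁ + r₀ := by
          gcongr
          · rw [edist_comm]; exact hdu
          · exact hU _ _ (hWyu.symm'.trans' hWyu')
      _ ≤ 3 * r₁ := by rw [add_assoc]; exact h3

/-- Extending an anchor along a `U`-walk. -/
lemma anchor_of_walk {x y v : X} (hx : x ∈ U) (hy : y ∈ U) (hW : walkRel U r₀ x y)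
    (h : anchorTo U V r₀ y v) : anchorTo U V r₀ x v := by
  obtain ⟨hvV, rfl | ⟨-, u, huU, hWyu, hdu⟩⟩ := h
  · exact ⟨hvV, Or.inr ⟨hx, y, hy, hW, by simp⟩⟩
  · exact ⟨hvV, Or.inr ⟨hx, u, huU, hW.trans' hWyu, hdu⟩⟩

lemma invRel.symm' {x y : X} (h : invRel U V r₀ r₁ x y) : invRel U V r₀ r₁ y x := by
  obtain rfl | ⟨hx, hy, hW⟩ | ⟨v, w, h1, h2, hW⟩ := h
  · exact Or.inl rfl
  · exact Or.inr (Or.inl ⟨hy, hx, hW.symm'⟩)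
  · exact Or.inr (Or.inr ⟨w, v, h2, h1, hW.symm'⟩)

include h01 hU in
lemma invRel_trans12 {x y z : X} (h1 : x ∈ U ∧ y ∈ U ∧ walkRel U r₀ x y)
    (h2 : ∃ v w, anchorTo U V r₀ y v ∧ anchorTo U V r₀ z w ∧ walkRel V (3 * r₁) v w) :
    invRel U V r₀ r₁ x z := by
  obtain ⟨hx, hy, hW⟩ := h1
  obtain ⟨v, w, hA1, hA2, hWV⟩ := h2
  exact Or.inr (Or.inr ⟨v, w, anchor_of_walk hx hy hW hA1, hA2, hWV⟩)

include h01 hU in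
lemma invRel.trans' {x y z : X} (h : invRel U V r₀ r₁ x y) (h' : invRel U V r₀ r₁ y z) :
    invRel U V r₀ r₁ x z := by
  obtain rfl | h | h := h
  · exact h'
  · obtain rfl | h' | h' := h'
    · exact Or.inr (Or.inl h)
    · exact Or.inr (Or.inl ⟨h.1, h'.2.1, h.2.2.trans' h'.2.2⟩)
    · exact invRel_trans12 h01 hU h h'
  · obtain rfl | h' | h' := h'
    · exact Or.inr (Or.inr h)
    · obtain ⟨v, w, hA1, hA2, hWV⟩ := h
      exact (invRel_trans12 h01 hU ⟨h'.2.1, h'.1, h'.2.2.symm'⟩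
        ⟨w, v, hA2, hA1, hWV.symm'⟩).symm'
    · obtain ⟨v, w, hA1, hA2, hWV⟩ := h
      obtain ⟨v', w', hA1', hA2', hWV'⟩ := h'
      exact Or.inr (Or.inr ⟨v, w', hA1, hA2',
        hWV.trans' ((anchors_link h01 hU hA2 hA1').trans' hWV')⟩)

include h01 in
lemma step_invRel {x y : X} (hx : x ∈ U ∪ V) (hy : y ∈ U ∪ V) (hd : edist x y ≤ r₀) :
    invRel U V r₀ r₁ x y := by
  have hd3 : edist x y ≤ 3 * r₁ := le_trans hd (le_trans h01 (by
    calc r₁ = 1 * r₁ := (one_mul _).symm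
    _ ≤ 3 * r₁ := by gcongr <;> norm_num))
  obtain hxU | hxV := hx
  · obtain hyU | hyV := hy
    · exact Or.inr (Or.inl ⟨hxU, hyU, Relation.EqvGen.rel _ _ ⟨hxU, hyU, hd⟩⟩)
    · refine Or.inr (Or.inr ⟨y, y, ⟨hyV, Or.inr ⟨hxU, x, hxU, Relation.EqvGen.refl _, hd⟩⟩,
        anchorTo.refl hyV, Relation.EqvGen.refl _⟩)
  · obtain hyU | hyV := hy
    · refine Or.inr (Or.inr ⟨x, x, anchorTo.refl hxV, ⟨hxV, Or.inr ⟨hyU, y, hyU,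
        Relation.EqvGen.refl _, by rw [edist_comm]; exact hd⟩⟩, Relation.EqvGen.refl _⟩)
    · exact Or.inr (Or.inr ⟨x, y, anchorTo.refl hxV, anchorTo.refl hyV,
        Relation.EqvGen.rel _ _ ⟨hxV, hyV, hd3⟩⟩)

end Aux

/-- Union of two sets: if `X₀` has `(r₀, r₁)`-dimension at most `d` and `X₁` has
`(3r₁, r₂)`-dimension at most `d`, then `X = X₀ ∪ X₁` has `(r₀, 5r₂)`-dimension
at most `d`. -/
theorem stmt9 {X : Type*} [EMetricSpace X] (d : ℕ)
    (X₀ X₁ : Set X) (hunion : X₀ ∪ X₁ = Set.univ)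
    (r₀ r₁ r₂ : ℝ≥0∞) (h01 : r₀ ≤ r₁) (h12 : r₁ ≤ r₂)
    (hd0 : hasDim X₀ r₀ r₁ d) (hd1 : hasDim X₁ (3 * r₁) r₂ d) :
    hasDim (Set.univ : Set X) r₀ (5 * r₂) d := by
  obtain ⟨U, hUcov, hU⟩ := hd0
  obtain ⟨V, hVcov, hV⟩ := hd1
  refine ⟨fun i => U i ∪ V i, ?_, ?_⟩
  · intro x _
    have hx : x ∈ X₀ ∪ X₁ := hunion ▸ Set.mem_univ x
    obtain hx | hx := hx
    · obtain ⟨S, ⟨i, rfl⟩, hxS⟩ := hUcov hx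
      exact Set.mem_iUnion.2 ⟨i, Or.inl hxS⟩
    · obtain ⟨S, ⟨i, rfl⟩, hxS⟩ := hVcov hx
      exact Set.mem_iUnion.2 ⟨i, Or.inr hxS⟩
  · intro i x y hW
    -- reduce to the invariant relation
    have key : invRel (U i) (V i) r₀ r₁ x y := by
      induction hW with
      | rel a b hab => exact step_invRel h01 hab.1 hab.2.1 hab.2.2
      | refl a => exact Or.inl rfl
      | symm a b _ ih => exact ih.symm'
      | trans a b c _ _ ih1 ih2 => exact ih1.trans' h01 (hU i) ih2
    -- extract the distance bound
    have anchor_bound : ∀ a v : X, anchorTo (U i) (V i) r₀ a v → edist a v ≤ 2 * r₂ := by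
      rintro a v ⟨-, rfl | ⟨-, u, -, hWau, hdu⟩⟩
      · simp
      · calc edist a v ≤ edist a u + edist u v := edist_triangle _ _ _
        _ ≤ r₁ + r₀ := by gcongr; exact hU i _ _ hWau
        _ ≤ r₂ + r₂ := by gcongr; exact le_trans h01 h12
        _ = 2 * r₂ := (two_mul _).symm
    obtain rfl | ⟨-, -, hWxy⟩ | ⟨v, w, hA1, hA2, hWV⟩ := key
    · simp
    · calc edist x y ≤ r₁ := hU i _ _ hWxy
      _ ≤ 5 * r₂ := le_trans h12 (by
          calc r₂ = 1 * r₂ := (one_mul _).symm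
          _ ≤ 5 * r₂ := by gcongr <;> norm_num)
    · calc edist x y ≤ edist x v + edist v w + edist w y := edist_triangle4 _ _ _ _
      _ ≤ 2 * r₂ + r₂ + 2 * r₂ := by
          gcongr
          · exact anchor_bound _ _ hA1
          · exact hV i _ _ hWV
          · rw [edist_comm]; exact anchor_bound _ _ hA2
      _ = 5 * r₂ := by ring
end

section
/- Let (X, ρ) be an extended metric space and for each n ∈ ℕ let V_n ⊆ X and a_n, b_n, r_n ≥ 0. Assume for every n that every class of the 6a_n-walk equivalence relation on V_n has diameter at most b_n, and that a_n ≥ r_n + Σ_{k<n} (4a_k + b_k). Then there exist sets U_n ⊇ V_n such that: for every n, U_n is contained in the a_n-neighborhood of V_n (so in particular the r_n-walk relation on U_n has uniformly bounded classes), and whenever n < m and x ∈ U_n, the closed ball B(x; r_n) is either disjoint from U_m or contained in U_m. -/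
/-!
`U n` is the `r n`-neighbourhood of `V n`, enlarged by absorbing, for `k = n - 1, …, 0` in this
order, every level-`k` piece that meets it. A level-`k` piece is the `r k`-neighbourhood of a class
of a walk relation on `U k`, enlarged in the same way by the pieces of lower levels. By induction
on the level, `U k` stays within `a k` of `V k` and its walk classes project to `6 a k`-walk
classes of `V k`, so level-`k` pieces have diameter at most `4 a k + b k`; the budget `a n` pays
for a chain of pieces of all lower levels. Pieces of one level are equal or disjoint, and
absorbing lower-level pieces never creates a new contact with a piece of a level already treated.
Hence `U m` contains every level-`n` piece (`n < m`) it meets, in particular every `r n`-ball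
around a point of `U n`.
-/

open scoped ENNReal NNReal

namespace Relation.EqvGen

variable {α β : Type*} {R : α → α → Prop} {x y : α}

theorem map {S : β → β → Prop} (f : α → β) (hf : ∀ x y, R x y → S (f x) (f y))
    (h : EqvGen R x y) : EqvGen S (f x) (f y) := by
  induction h with
  | rel x y h => exact .rel _ _ (hf x y h)
  | refl x => exact .refl _
  | symm x y _ ih => exact .symm _ _ ih
  | trans x y z _ _ ih₁ ih₂ => exact .trans _ _ _ ih₁ ih₂

theorem eq_or_mem {U : Set α} (hR : ∀ x y, R x y → x ∈ U ∧ y ∈ U) (h : EqvGen R x y) :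
    x = y ∨ x ∈ U ∧ y ∈ U := by
  induction h with
  | rel x y h => exact .inr (hR x y h)
  | refl x => exact .inl rfl
  | symm x y _ ih => rcases ih with rfl | ⟨hx, hy⟩ <;> simp_all
  | trans x y z _ _ ih₁ ih₂ =>
    rcases ih₁ with rfl | ⟨hx, hy⟩ <;> rcases ih₂ with rfl | ⟨hy, hz⟩ <;> simp_all

end Relation.EqvGen

section

open Set Relation Metric

variable {X : Type*} [EMetricSpace X]

def nbhd (S : Set X) (t : ℝ≥0∞) : Set X := {x | ∃ s ∈ S, edist x s ≤ t}

section nbhd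

variable {S T : Set X} {t t' : ℝ≥0∞}

theorem subset_nbhd : S ⊆ nbhd S t := fun x hx => ⟨x, hx, by simp⟩

theorem nbhd_mono (hST : S ⊆ T) (ht : t ≤ t') : nbhd S t ⊆ nbhd T t' :=
  fun _ ⟨s, hs, h⟩ => ⟨s, hST hs, h.trans ht⟩

theorem nbhd_nbhd_subset : nbhd (nbhd S t) t' ⊆ nbhd S (t + t') := by
  rintro x ⟨y, ⟨s, hs, hys⟩, hxy⟩
  exact ⟨s, hs, (edist_triangle x y s).trans (by rw [add_comm]; gcongr)⟩

theorem ediam_nbhd_le : ediam (nbhd S t) ≤ ediam S + 2 * t := by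
  refine ediam_le fun x ⟨s, hs, hxs⟩ y ⟨s', hs', hys'⟩ => ?_
  calc edist x y ≤ edist x s + edist s s' + edist s' y := edist_triangle4 _ _ _ _
    _ ≤ t + ediam S + t := by
      gcongr
      · exact edist_le_ediam_of_mem hs hs'
      · rwa [edist_comm]
    _ = ediam S + 2 * t := by ring

end nbhd

theorem walkRel_mono {U : Set X} {s s' : ℝ≥0∞} (h : s ≤ s') {x y : X}
    (hxy : walkRel U s x y) : walkRel U s' x y :=
  EqvGen.mono (fun _ _ ⟨hp, hq, hpq⟩ => ⟨hp, hq, hpq.trans h⟩) _ _ hxy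

/-- Project every point of `U` to a point of `V` at distance at most `A`: steps of length `t`
in `U` become steps of length `A + t + A` in `V`. -/
theorem edist_le_of_eqvGen {R : X → X → Prop} {U V : Set X} {A t B : ℝ≥0∞}
    (hU : U ⊆ nbhd V A) (hR : ∀ p q, R p q → p ∈ U ∧ q ∈ U ∧ edist p q ≤ t)
    (hV : ∀ v w, walkRel V (A + t + A) v w → edist v w ≤ B) {p q : X} (h : EqvGen R p q) :
    edist p q ≤ A + B + A := by
  have hU' : ∀ x ∈ U, ∃ v ∈ V, edist x v ≤ A := hU
  choose! π hπV hπ using hU'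
  have hwalk : walkRel V (A + t + A) (π p) (π q) := by
    refine h.map π fun x y hxy => ?_
    obtain ⟨hx, hy, hxy⟩ := hR x y hxy
    refine ⟨hπV x hx, hπV y hy, ?_⟩
    calc edist (π x) (π y) ≤ edist (π x) x + edist x y + edist y (π y) :=
          edist_triangle4 _ _ _ _
      _ ≤ A + t + A := by
        gcongr
        · rw [edist_comm]; exact hπ x hx
        · exact hπ y hy
  rcases h.eq_or_mem fun x y hxy => ⟨(hR x y hxy).1, (hR x y hxy).2.1⟩ with rfl | ⟨hp, hq⟩
  · simp
  calc edist p q ≤ edist p (π p) + edist (π p) (π q) + edist (π q) q :=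
        edist_triangle4 _ _ _ _
    _ ≤ A + B + A := by
      gcongr
      · exact hπ p hp
      · exact hV _ _ hwalk
      · rw [edist_comm]; exact hπ q hq

def bridgeRel (U : Set X) (r D : ℝ≥0∞) (p q : X) : Prop :=
  p ∈ U ∧ q ∈ U ∧ ∃ S : Set X, ediam S ≤ D ∧ p ∈ nbhd S r ∧ q ∈ nbhd S r

theorem edist_le_of_bridgeRel {U : Set X} {r D : ℝ≥0∞} {p q : X} (h : bridgeRel U r D p q) :
    edist p q ≤ r + D + r := by
  obtain ⟨-, -, S, hS, ⟨s, hs, hps⟩, ⟨s', hs', hqs'⟩⟩ := h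
  calc edist p q ≤ edist p s + edist s s' + edist s' q := edist_triangle4 _ _ _ _
    _ ≤ r + D + r := by
      gcongr
      · exact (edist_le_ediam_of_mem hs hs').trans hS
      · rwa [edist_comm]

theorem eqvGen_bridgeRel_of_walkRel {U : Set X} {r D : ℝ≥0∞} {p q : X}
    (h : walkRel U r p q) : EqvGen (bridgeRel U r D) p q :=
  EqvGen.mono (fun p q ⟨hp, hq, hpq⟩ =>
    ⟨hp, hq, {p}, by simp, subset_nbhd rfl, ⟨p, rfl, by rwa [edist_comm]⟩⟩) _ _ h

/-- At level `j`: the set `V j`, the radius `r j` of the balls to be kept whole, and a bound `c j`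
for the diameters of the level-`j` pieces. -/
structure BufferData (X : Type*) where
  V : ℕ → Set X
  r : ℕ → ℝ≥0∞
  c : ℕ → ℝ≥0∞

namespace BufferData

variable (B : BufferData X)

noncomputable def chainDiam (j : ℕ) : ℝ≥0∞ := ∑ k ∈ Finset.range j, B.c k

/-- `B.saturation j Z` enlarges `Z` by the level-`k` pieces meeting it, for `k = j - 1, …, 0` in
this order. The `let`s are `B.buffer j` and `B.piece j` below, which this recursion defines. -/
def saturation : ℕ → Set X → Set X
  | 0, Z => Z
  | j + 1, Z =>
    let U := saturation j (nbhd (B.V j) (B.r j))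
    let piece (w : X) :=
      saturation j (nbhd {y | EqvGen (bridgeRel U (B.r j) (B.chainDiam j)) w y} (B.r j))
    saturation j (Z ∪ ⋃ w ∈ {w ∈ U | (piece w ∩ Z).Nonempty}, piece w)

def buffer (j : ℕ) : Set X := B.saturation j (nbhd (B.V j) (B.r j))

/-- Bridging by any set of diameter at most `B.chainDiam j`, not only by steps of length `r j`,
is what makes two level-`j` pieces that meet come from the same class: their contact may run
through a chain of lower-level pieces. -/
def rel (j : ℕ) : X → X → Prop := bridgeRel (B.buffer j) (B.r j) (B.chainDiam j)

def walkClass (j : ℕ) (w : X) : Set X := {y | EqvGen (B.rel j) w y}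

def piece (j : ℕ) (w : X) : Set X := B.saturation j (nbhd (B.walkClass j w) (B.r j))

def absorb (j : ℕ) (Z : Set X) : Set X :=
  Z ∪ ⋃ w ∈ {w ∈ B.buffer j | (B.piece j w ∩ Z).Nonempty}, B.piece j w

theorem saturation_succ (j : ℕ) (Z : Set X) :
    B.saturation (j + 1) Z = B.saturation j (B.absorb j Z) := rfl

def IsSaturated (k : ℕ) (Z : Set X) : Prop :=
  ∀ x ∈ B.buffer k, (B.piece k x ∩ Z).Nonempty → B.piece k x ⊆ Z

def PiecesBounded (k : ℕ) : Prop := ∀ w, ediam (B.piece k w) ≤ B.c k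

variable {B}

theorem subset_saturation (j : ℕ) (Z : Set X) : Z ⊆ B.saturation j Z := by
  induction j generalizing Z with
  | zero => exact subset_rfl
  | succ j ih => rw [saturation_succ]; exact subset_union_left.trans (ih _)

theorem mem_absorb {j : ℕ} {Z : Set X} {e : X} :
    e ∈ B.absorb j Z ↔
      e ∈ Z ∨ ∃ w ∈ B.buffer j, (B.piece j w ∩ Z).Nonempty ∧ e ∈ B.piece j w := by
  simp [absorb, and_assoc]

theorem piece_subset_absorb {j : ℕ} {Z : Set X} {w : X} (hw : w ∈ B.buffer j)
    (h : (B.piece j w ∩ Z).Nonempty) : B.piece j w ⊆ B.absorb j Z :=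
  fun _ he => mem_absorb.2 (.inr ⟨w, hw, h, he⟩)

theorem setOf_edist_le_subset_piece (j : ℕ) (x : X) : {y | edist x y ≤ B.r j} ⊆ B.piece j x :=
  fun y hy => subset_saturation _ _ ⟨x, EqvGen.refl x, by rwa [edist_comm]⟩

/-- Every point of `B.saturation j Z` lies in a set of diameter at most `B.chainDiam j` meeting `Z`:
the union of the chain of pieces through which it was absorbed. -/
theorem exists_ediam_le_of_mem_saturation {j : ℕ} (hB : ∀ k < j, B.PiecesBounded k)
    {Z : Set X} {e : X} (he : e ∈ B.saturation j Z) :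
    ∃ S, ediam S ≤ B.chainDiam j ∧ e ∈ S ∧ (S ∩ Z).Nonempty := by
  induction j generalizing Z with
  | zero => exact ⟨{e}, by simp, rfl, e, rfl, he⟩
  | succ j ih =>
    rw [saturation_succ] at he
    obtain ⟨S, hS, heS, s, hsS, hs⟩ := ih (fun k hk => hB k (by omega)) he
    rcases mem_absorb.1 hs with hsZ | ⟨w, hw, hwZ, hsw⟩
    · exact ⟨S, hS.trans (Finset.sum_le_sum_of_subset (by simp)), heS, s, hsS, hsZ⟩
    · refine ⟨S ∪ B.piece j w, ?_, .inl heS,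
        hwZ.mono (inter_subset_inter_left _ subset_union_right)⟩
      calc ediam (S ∪ B.piece j w)
          ≤ ediam S + ediam (B.piece j w) := ediam_union_le ⟨s, hsS, hsw⟩
        _ ≤ B.chainDiam j + B.c j := add_le_add hS (hB j j.lt_succ_self w)
        _ = B.chainDiam (j + 1) := (Finset.sum_range_succ _ _).symm

theorem saturation_subset_nbhd {j : ℕ} (hB : ∀ k < j, B.PiecesBounded k) (Z : Set X) :
    B.saturation j Z ⊆ nbhd Z (B.chainDiam j) := by
  intro e he
  obtain ⟨S, hS, heS, s, hsS, hsZ⟩ := exists_ediam_le_of_mem_saturation hB he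
  exact ⟨s, hsZ, (edist_le_ediam_of_mem heS hsS).trans hS⟩

theorem buffer_subset_nbhd {j : ℕ} (hB : ∀ k < j, B.PiecesBounded k) :
    B.buffer j ⊆ nbhd (B.V j) (B.r j + B.chainDiam j) :=
  (saturation_subset_nbhd hB _).trans nbhd_nbhd_subset

theorem inter_nonempty_of_inter_saturation {j : ℕ} {P Z : Set X}
    (hP : ∀ k < j, B.IsSaturated k P) (h : (P ∩ B.saturation j Z).Nonempty) :
    (P ∩ Z).Nonempty := by
  induction j generalizing Z with
  | zero => exact h
  | succ j ih =>
    rw [saturation_succ] at h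
    obtain ⟨e, heP, he⟩ := ih (fun k hk => hP k (by omega)) h
    rcases mem_absorb.1 he with heZ | ⟨w, hw, hwZ, hew⟩
    · exact ⟨e, heP, heZ⟩
    · exact hwZ.mono (inter_subset_inter_left _ (hP j j.lt_succ_self w hw ⟨e, hew, heP⟩))

theorem mem_buffer_of_eqvGen_rel {j : ℕ} {x y : X} (hx : x ∈ B.buffer j)
    (h : EqvGen (B.rel j) x y) : y ∈ B.buffer j := by
  rcases h.eq_or_mem fun _ _ h => ⟨h.1, h.2.1⟩ with rfl | ⟨-, hy⟩
  exacts [hx, hy]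

theorem eqvGen_rel_of_inter_nonempty {j : ℕ} (hB : ∀ k < j, B.PiecesBounded k)
    (hsat : ∀ k < j, ∀ Z, B.IsSaturated k (B.saturation j Z)) {x w : X}
    (hx : x ∈ B.buffer j) (hw : w ∈ B.buffer j) (h : (B.piece j x ∩ B.piece j w).Nonempty) :
    EqvGen (B.rel j) x w := by
  obtain ⟨e, hex, p', hwp', hep'⟩ :=
    inter_nonempty_of_inter_saturation (fun k hk => hsat k hk _) h
  obtain ⟨S, hS, heS, s, hsS, p, hxp, hsp⟩ := exists_ediam_le_of_mem_saturation hB hex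
  have hpp' : B.rel j p p' :=
    ⟨mem_buffer_of_eqvGen_rel hx hxp, mem_buffer_of_eqvGen_rel hw hwp', S, hS,
      ⟨s, hsS, by rwa [edist_comm]⟩, ⟨e, heS, by rwa [edist_comm]⟩⟩
  exact hxp.trans _ _ _ ((EqvGen.rel _ _ hpp').trans _ _ _ (hwp'.symm _ _))

theorem piece_eq_of_eqvGen_rel {j : ℕ} {x w : X} (h : EqvGen (B.rel j) x w) :
    B.piece j x = B.piece j w := by
  have : B.walkClass j x = B.walkClass j w :=
    ext fun y => ⟨(h.symm _ _).trans _ _ _, h.trans _ _ _⟩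
  rw [piece, piece, this]

theorem isSaturated_absorb {j : ℕ}
    (hpiece : ∀ x ∈ B.buffer j, ∀ w ∈ B.buffer j,
      (B.piece j x ∩ B.piece j w).Nonempty → B.piece j x = B.piece j w)
    (Z : Set X) : B.IsSaturated j (B.absorb j Z) := by
  rintro x hx ⟨e, hex, he⟩
  rcases mem_absorb.1 he with heZ | ⟨w, hw, hwZ, hew⟩
  · exact piece_subset_absorb hx ⟨e, hex, heZ⟩
  · rw [hpiece x hx w hw ⟨e, hex, hew⟩]
    exact piece_subset_absorb hw hwZ

theorem isSaturated_saturation (hB : ∀ k, B.PiecesBounded k) {j k : ℕ} (hkj : k < j)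
    (Z : Set X) : B.IsSaturated k (B.saturation j Z) := by
  induction j generalizing k Z with
  | zero => omega
  | succ j ih =>
    rw [saturation_succ]
    rcases Nat.lt_succ_iff_lt_or_eq.1 hkj with hkj | rfl
    · exact ih hkj _
    intro x hx hne
    have hpiece : ∀ x ∈ B.buffer k, ∀ w ∈ B.buffer k,
        (B.piece k x ∩ B.piece k w).Nonempty → B.piece k x = B.piece k w :=
      fun x hx w hw h => piece_eq_of_eqvGen_rel <|
        eqvGen_rel_of_inter_nonempty (fun k _ => hB k) (fun _ hk _ => ih hk _) hx hw h
    have hne' := inter_nonempty_of_inter_saturation (fun _ hk => ih hk _) hne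
    exact (isSaturated_absorb hpiece Z x hx hne').trans (subset_saturation _ _)

theorem setOf_edist_le_subset_or_disjoint (hB : ∀ k, B.PiecesBounded k) {n m : ℕ}
    (hnm : n < m) {x : X} (hx : x ∈ B.buffer n) :
    {y | edist x y ≤ B.r n} ⊆ B.buffer m ∨
      ∀ y, edist x y ≤ B.r n → y ∉ B.buffer m := by
  by_cases h : ({y | edist x y ≤ B.r n} ∩ B.buffer m).Nonempty
  · have hball := setOf_edist_le_subset_piece (B := B) n x
    exact .inl <| hball.trans <|
      isSaturated_saturation hB hnm _ x hx (h.mono (inter_subset_inter_left _ hball))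
  · exact .inr fun y hy hyU => h ⟨y, hy, hyU⟩

section

variable {j : ℕ} {a b : ℝ≥0∞}

theorem edist_le_of_eqvGen_rel (hB : ∀ k < j, B.PiecesBounded k)
    (hdiam : ∀ x y, walkRel (B.V j) (6 * a) x y → edist x y ≤ b)
    (hgrow : B.r j + B.chainDiam j ≤ a) {p q : X} (h : EqvGen (B.rel j) p q) :
    edist p q ≤ a + b + a := by
  have hr : B.r j ≤ a := le_self_add.trans hgrow
  refine edist_le_of_eqvGen ((buffer_subset_nbhd hB).trans (nbhd_mono subset_rfl hgrow))
    (fun p q hpq => ⟨hpq.1, hpq.2.1, edist_le_of_bridgeRel hpq⟩)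
    (fun v w hvw => hdiam v w (walkRel_mono ?_ hvw)) h
  calc a + (B.r j + B.chainDiam j + B.r j) + a ≤ a + (a + a) + a := by gcongr
    _ = 4 * a := by ring
    _ ≤ 6 * a := by gcongr; norm_num

theorem ediam_piece_le (hB : ∀ k < j, B.PiecesBounded k)
    (hdiam : ∀ x y, walkRel (B.V j) (6 * a) x y → edist x y ≤ b)
    (hgrow : B.r j + B.chainDiam j ≤ a) (z : X) : ediam (B.piece j z) ≤ 4 * a + b :=
  calc ediam (B.piece j z) ≤ ediam (nbhd (B.walkClass j z) (B.r j + B.chainDiam j)) :=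
        ediam_mono ((saturation_subset_nbhd hB _).trans nbhd_nbhd_subset)
    _ ≤ ediam (B.walkClass j z) + 2 * (B.r j + B.chainDiam j) := ediam_nbhd_le
    _ ≤ (a + b + a) + 2 * a := by
      gcongr
      exact ediam_le fun p hp q hq =>
        edist_le_of_eqvGen_rel hB hdiam hgrow ((hp.symm _ _).trans _ _ _ hq)
    _ = 4 * a + b := by ring

end

theorem piecesBounded {a b : ℕ → ℝ≥0∞}
    (hdiam : ∀ n x y, walkRel (B.V n) (6 * a n) x y → edist x y ≤ b n)
    (hgrow : ∀ n, B.r n + B.chainDiam n ≤ a n) (hc : ∀ n, 4 * a n + b n ≤ B.c n) (j : ℕ) :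
    B.PiecesBounded j := by
  induction j using Nat.strong_induction_on with
  | _ j ih => exact fun z => (ediam_piece_le ih (hdiam j) (hgrow j) z).trans (hc j)

end BufferData

end

/-- The buffer lemma: separating boundaries of a sequence of sets. -/
theorem stmt11 {X : Type*} [EMetricSpace X]
    (V : ℕ → Set X) (a b r : ℕ → ℝ≥0)
    (hdiam : ∀ n, ∀ x y : X,
      walkRel (V n) ((6 * a n : ℝ≥0) : ℝ≥0∞) x y → edist x y ≤ ((b n : ℝ≥0) : ℝ≥0∞))
    (hgrow : ∀ n, r n + ∑ k ∈ Finset.range n, (4 * a k + b k) ≤ a n) :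
    ∃ U : ℕ → Set X, ∀ n,
      V n ⊆ U n ∧
      U n ⊆ {x : X | ∃ v ∈ V n, edist x v ≤ ((a n : ℝ≥0) : ℝ≥0∞)} ∧
      (∃ R : ℝ≥0, ∀ x y : X, walkRel (U n) ((r n : ℝ≥0) : ℝ≥0∞) x y →
        edist x y ≤ (R : ℝ≥0∞)) ∧
      ∀ m, n < m → ∀ x ∈ U n,
        ({y : X | edist x y ≤ ((r n : ℝ≥0) : ℝ≥0∞)} ⊆ U m ∨
          ∀ y : X, edist x y ≤ ((r n : ℝ≥0) : ℝ≥0∞) → y ∉ U m) := by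
  let B : BufferData X := ⟨V, fun n => r n, fun n => ((4 * a n + b n : ℝ≥0) : ℝ≥0∞)⟩
  have hdiam' : ∀ n x y, walkRel (B.V n) (6 * a n) x y → edist x y ≤ b n := by
    simpa using hdiam
  have hgrow' : ∀ n, B.r n + B.chainDiam n ≤ a n := fun n => by
    simpa [B, BufferData.chainDiam] using ENNReal.coe_le_coe.2 (hgrow n)
  have hB := B.piecesBounded hdiam' hgrow' fun n => by simp [B]
  refine ⟨B.buffer, fun n => ⟨subset_nbhd.trans (B.subset_saturation _ _),
    (B.buffer_subset_nbhd fun k _ => hB k).trans (nbhd_mono subset_rfl (hgrow' n)),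
    ⟨a n + b n + a n, fun x y h => ?_⟩,
    fun m hnm x hx => B.setOf_edist_le_subset_or_disjoint hB hnm hx⟩⟩
  push_cast
  exact B.edist_le_of_eqvGen_rel (fun k _ => hB k) (hdiam' n) (hgrow' n)
    (eqvGen_bridgeRel_of_walkRel h)
end

section
/- Let (X, ρ) be an extended metric space, r > 0, and suppose (V_n)_{n∈ℕ} is a sequence of subsets of X such that: the 3r-walk equivalence relation on each V_n has classes of finite diameter; for every x ∈ X there is n with B(x; r) ⊆ V_n; and whenever n < m and x ∈ V_n, the ball B(x; 4r) is either contained in or disjoint from V_m. Then there exist two sets U_0, U_1 covering X such that for i ∈ {0,1}, every class of the r-walk equivalence relation on U_i has finite diameter. -/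
open scoped ENNReal NNReal

/-!
Split `X` into the shell points `U₀`, those `x` for which some `V n` contains `B(x; r)` but not
`B(x; 2r)`, and the rest `U₁`. Two shell points at distance `≤ r` are shell points of the same
`V n`: otherwise the `4r`-ball condition would put the `2r`-ball of the higher-level point inside,
or the point itself outside, its own `V m`. Likewise, along an `r`-walk in `U₁` the property
`B(x; 2r) ⊆ V n` propagates. In both cases an `r`-walk class is contained in a `3r`-walk class
of a single `V n`, which has finite diameter.
-/

section

open Metric

variable {X : Type*} [EMetricSpace X]

def WalkBounded (U : Set X) (s : ℝ≥0∞) (x : X) : Prop :=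
  ∃ R : ℝ≥0, ∀ y : X, walkRel U s x y → edist x y ≤ (R : ℝ≥0∞)

lemma walkRel.eq_or_mem {U : Set X} {s : ℝ≥0∞} {x y : X} (h : walkRel U s x y) :
    x = y ∨ x ∈ U ∧ y ∈ U := by
  induction h with
  | rel a b h => exact Or.inr ⟨h.1, h.2.1⟩
  | refl a => exact Or.inl rfl
  | symm a b _ ih => exact ih.imp Eq.symm And.symm
  | trans a b c _ _ ih₁ ih₂ =>
    rcases ih₁ with rfl | ⟨ha, hb⟩
    · exact ih₂
    rcases ih₂ with rfl | ⟨-, hc⟩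
    exacts [Or.inr ⟨ha, hb⟩, Or.inr ⟨ha, hc⟩]

lemma walkRel.of_invariant {U W P : Set X} {s t : ℝ≥0∞} {x y : X}
    (hP : ∀ a ∈ U, ∀ b ∈ U, edist a b ≤ s → a ∈ P → b ∈ P) (hPW : P ⊆ W) (hst : s ≤ t)
    (h : walkRel U s x y) (hx : x ∈ P) : walkRel W t x y := by
  suffices (x ∈ P ↔ y ∈ P) ∧ (x ∈ P → walkRel W t x y) from this.2 hx
  clear hx
  induction h with
  | rel a b h =>
    obtain ⟨ha, hb, hab⟩ := h
    refine ⟨⟨hP a ha b hb hab, hP b hb a ha (by rwa [edist_comm])⟩, fun haP => ?_⟩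
    exact .rel _ _ ⟨hPW haP, hPW (hP a ha b hb hab haP), hab.trans hst⟩
  | refl a => exact ⟨Iff.rfl, fun _ => .refl _⟩
  | symm a b _ ih => exact ⟨ih.1.symm, fun hbP => .symm _ _ (ih.2 (ih.1.2 hbP))⟩
  | trans a b c _ _ ih₁ ih₂ =>
    exact ⟨ih₁.1.trans ih₂.1, fun haP => .trans _ _ _ (ih₁.2 haP) (ih₂.2 (ih₁.1.1 haP))⟩

lemma WalkBounded.of_walkRel_imp {U W : Set X} {s t : ℝ≥0∞} {x : X} (hW : WalkBounded W t x)
    (h : ∀ y, walkRel U s x y → walkRel W t x y) : WalkBounded U s x :=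
  let ⟨R, hR⟩ := hW
  ⟨R, fun y hy => hR y (h y hy)⟩

lemma walkBounded_of_notMem {U : Set X} {s : ℝ≥0∞} {x : X} (hx : x ∉ U) : WalkBounded U s x :=
  ⟨0, fun y hy => by
    rcases hy.eq_or_mem with rfl | ⟨hxU, -⟩
    exacts [by simp, absurd hxU hx]⟩

def IsShellPoint (V : Set X) (r : ℝ≥0∞) (x : X) : Prop :=
  closedEBall x r ⊆ V ∧ ¬ closedEBall x (2 * r) ⊆ V

variable {V : ℕ → Set X} {r : ℝ≥0∞}

def shellPoints (V : ℕ → Set X) (r : ℝ≥0∞) : Set X :=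
  {x | ∃ n, IsShellPoint (V n) r x}

lemma IsShellPoint.mem {x : X} {n : ℕ} (hx : IsShellPoint (V n) r x) : x ∈ V n :=
  hx.1 mem_closedEBall_self

lemma IsShellPoint.level_le
    (hsep : ∀ n m, n < m → ∀ x ∈ V n,
      closedEBall x (4 * r) ⊆ V m ∨ Disjoint (closedEBall x (4 * r)) (V m))
    {n m : ℕ} {a b : X} (ha : IsShellPoint (V n) r a) (hb : IsShellPoint (V m) r b)
    (hab : edist a b ≤ r) : m ≤ n := by
  by_contra! hnm
  have hr : r ≤ 4 * r := le_mul_of_one_le_left' (by norm_num)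
  rcases hsep n m hnm a ha.mem with hsub | hdisj
  · refine hb.2 fun z hz => hsub ?_
    calc edist z a ≤ edist z b + edist b a := edist_triangle _ _ _
      _ ≤ 2 * r + r := add_le_add hz (by rwa [edist_comm])
      _ ≤ 4 * r := by rw [← add_one_mul]; gcongr; norm_num
  · exact Set.disjoint_left.1 hdisj (mem_closedEBall'.2 (hab.trans hr)) hb.mem

lemma IsShellPoint.level_eq
    (hsep : ∀ n m, n < m → ∀ x ∈ V n,
      closedEBall x (4 * r) ⊆ V m ∨ Disjoint (closedEBall x (4 * r)) (V m))
    {n m : ℕ} {a b : X} (ha : IsShellPoint (V n) r a) (hb : IsShellPoint (V m) r b)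
    (hab : edist a b ≤ r) : n = m :=
  le_antisymm (hb.level_le hsep ha (by rwa [edist_comm])) (ha.level_le hsep hb hab)

variable {t : ℝ≥0∞}

lemma walkBounded_shellPoints
    (hsep : ∀ n m, n < m → ∀ x ∈ V n,
      closedEBall x (4 * r) ⊆ V m ∨ Disjoint (closedEBall x (4 * r)) (V m))
    (hbdd : ∀ n, ∀ x ∈ V n, WalkBounded (V n) t x) (hrt : r ≤ t) (x : X) :
    WalkBounded (shellPoints V r) r x := by
  by_cases hx : x ∈ shellPoints V r
  · obtain ⟨n, hn⟩ := hx
    refine (hbdd n x hn.mem).of_walkRel_imp fun y hy =>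
      hy.of_invariant (P := {a | IsShellPoint (V n) r a}) ?_ ?_ hrt hn
    · rintro a - b ⟨m, hm⟩ hab ha
      rwa [ha.level_eq hsep hm hab]
    · exact fun a ha => IsShellPoint.mem ha
  · exact walkBounded_of_notMem hx

lemma walkBounded_compl_shellPoints
    (hcover : ∀ x : X, ∃ n, closedEBall x r ⊆ V n)
    (hbdd : ∀ n, ∀ x ∈ V n, WalkBounded (V n) t x) (hrt : r ≤ t) (x : X) :
    WalkBounded (shellPoints V r)ᶜ r x := by
  have deep {a : X} (ha : a ∈ (shellPoints V r)ᶜ) {n : ℕ} (hn : closedEBall a r ⊆ V n) :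
      closedEBall a (2 * r) ⊆ V n :=
    not_and_not_right.1 (fun h => ha ⟨n, h⟩) hn
  by_cases hx : x ∈ (shellPoints V r)ᶜ
  · obtain ⟨n, hn⟩ := hcover x
    refine (hbdd n x (hn mem_closedEBall_self)).of_walkRel_imp fun y hy =>
      hy.of_invariant (P := {a | closedEBall a (2 * r) ⊆ V n}) ?_ ?_ hrt (deep hx hn)
    · refine fun a _ b hb hab ha => deep hb fun z hz => ha ?_
      calc edist z a ≤ edist z b + edist b a := edist_triangle _ _ _
        _ ≤ r + r := add_le_add hz (by rwa [edist_comm])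
        _ = 2 * r := (two_mul r).symm
    · exact fun a ha => ha mem_closedEBall_self
  · exact walkBounded_of_notMem hx

end

theorem stmt12_general {X : Type*} [EMetricSpace X] (r : ℝ≥0)
    (V : ℕ → Set X)
    (hbdd : ∀ n, ∀ x ∈ V n, ∃ R : ℝ≥0, ∀ y : X,
      walkRel (V n) ((3 * r : ℝ≥0) : ℝ≥0∞) x y → edist x y ≤ (R : ℝ≥0∞))
    (hcover : ∀ x : X, ∃ n, ∀ y : X, edist x y ≤ (r : ℝ≥0∞) → y ∈ V n)
    (hsep : ∀ n m, n < m → ∀ x ∈ V n,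
      ({y : X | edist x y ≤ ((4 * r : ℝ≥0) : ℝ≥0∞)} ⊆ V m ∨
        ∀ y : X, edist x y ≤ ((4 * r : ℝ≥0) : ℝ≥0∞) → y ∉ V m)) :
    ∃ U₀ U₁ : Set X, U₀ ∪ U₁ = Set.univ ∧
      (∀ x : X, ∃ R : ℝ≥0, ∀ y : X,
        walkRel U₀ (r : ℝ≥0∞) x y → edist x y ≤ (R : ℝ≥0∞)) ∧
      (∀ x : X, ∃ R : ℝ≥0, ∀ y : X,
        walkRel U₁ (r : ℝ≥0∞) x y → edist x y ≤ (R : ℝ≥0∞)) := by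
  have hrt : (r : ℝ≥0∞) ≤ ((3 * r : ℝ≥0) : ℝ≥0∞) :=
    ENNReal.coe_le_coe.2 (le_mul_of_one_le_left' (by norm_num))
  have hcover' : ∀ x : X, ∃ n, Metric.closedEBall x r ⊆ V n := fun x =>
    (hcover x).imp fun n hn y hy => hn y (Metric.mem_closedEBall'.1 hy)
  have hsep' : ∀ n m, n < m → ∀ x ∈ V n, Metric.closedEBall x (4 * (r : ℝ≥0∞)) ⊆ V m ∨
      Disjoint (Metric.closedEBall x (4 * (r : ℝ≥0∞))) (V m) := fun n m hnm x hx => by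
    simp only [ENNReal.coe_mul, ENNReal.coe_ofNat] at hsep
    exact (hsep n m hnm x hx).imp (fun h y hy => h (Metric.mem_closedEBall'.1 hy))
      fun h => Set.disjoint_left.2 fun y hy => h y (Metric.mem_closedEBall'.1 hy)
  exact ⟨shellPoints V r, (shellPoints V r)ᶜ, Set.union_compl_self _,
    walkBounded_shellPoints hsep' hbdd hrt, walkBounded_compl_shellPoints hcover' hbdd hrt⟩

/-- The toast criterion for asymptotic separation index at most 1 (at scale `r`). -/
theorem stmt12 {X : Type*} [EMetricSpace X] (r : ℝ≥0) (hr : 0 < r)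
    (V : ℕ → Set X)
    (hbdd : ∀ n, ∀ x ∈ V n, ∃ R : ℝ≥0, ∀ y : X,
      walkRel (V n) ((3 * r : ℝ≥0) : ℝ≥0∞) x y → edist x y ≤ (R : ℝ≥0∞))
    (hcover : ∀ x : X, ∃ n, ∀ y : X, edist x y ≤ (r : ℝ≥0∞) → y ∈ V n)
    (hsep : ∀ n m, n < m → ∀ x ∈ V n,
      ({y : X | edist x y ≤ ((4 * r : ℝ≥0) : ℝ≥0∞)} ⊆ V m ∨
        ∀ y : X, edist x y ≤ ((4 * r : ℝ≥0) : ℝ≥0∞) → y ∉ V m)) :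
    ∃ U₀ U₁ : Set X, U₀ ∪ U₁ = Set.univ ∧
      (∀ x : X, ∃ R : ℝ≥0, ∀ y : X,
        walkRel U₀ (r : ℝ≥0∞) x y → edist x y ≤ (R : ℝ≥0∞)) ∧
      (∀ x : X, ∃ R : ℝ≥0, ∀ y : X,
        walkRel U₁ (r : ℝ≥0∞) x y → edist x y ≤ (R : ℝ≥0∞)) :=
  stmt12_general r V hbdd hcover hsep
end

section
/- Let X be a set, f : X → X a function, and let Y ⊆ X and m, r ∈ ℕ be such that for every x ∈ X, the set {x, f(x), ..., f^{2r}(x)} contains at most one point of Y and the set {f(x), ..., f^m(x)} contains at least one point of Y. Define g : X → Y by g(x) = f^i(x) for the least i > 0 with f^i(x) ∈ Y, and define the equivalence relation E by x E y iff g(f^r(x)) = g(f^r(y)). Then every E-class has diameter at most 2(m + 3r) in the graph metric of the graph Γ_f (where x is adjacent to y iff f(x) = y or f(y) = x and x ≠ y), and for every x ∈ X the closed ball B(x; r) in the graph metric meets at most 2 classes of E. -/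
/-!
Write `n(s)` for the first time after `s` at which the orbit of `x` visits `Y`, so that
`g (f^[s] x) = f^[n(s)] x`. Since `Y` is visited within `m` steps, `g (f^[r] x) = f^[k] x`
with `k ≤ r + m`, and two points with the same `g (f^[r] ·)` are joined through that common
orbit point. A point `y` at distance `≤ r` from `x` satisfies `f^[r] y = f^[s] x` for some
`s ≤ 2r`. For such `s`, either `n(s) ≤ 2r`, and then `f^[n(s)] x = f^[n(0)] x` because the
orbit segment of length `2r` meets `Y` in at most one point, or `n(s) > 2r`, and then
`n(s) = n(2r)`. Hence the ball meets only the classes of `g x` and `g (f^[2r] x)`.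
-/

/-- The graph `Γ_f` of a function `f`: `x` adjacent to `y` iff `x ≠ y` and
`f x = y` or `f y = x`. -/
def graphOf {X : Type*} (f : X → X) : SimpleGraph X where
  Adj x y := x ≠ y ∧ (f x = y ∨ f y = x)
  symm := ⟨fun _ _ h => ⟨h.1.symm, h.2.symm⟩⟩
  loopless := ⟨fun _ h => h.1 rfl⟩

section GraphOf

open SimpleGraph

variable {X : Type*} {f : X → X}

lemma exists_walk_graphOf_iterate (x : X) (k : ℕ) :
    ∃ w : (graphOf f).Walk x (f^[k] x), w.length ≤ k := by
  induction k with
  | zero => exact ⟨Walk.nil, le_rfl⟩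
  | succ k ih =>
    obtain ⟨w, hw⟩ := ih
    rw [Function.iterate_succ_apply']
    by_cases hfix : f^[k] x = f (f^[k] x)
    · exact ⟨w.copy rfl hfix, by simp only [Walk.length_copy]; omega⟩
    · exact ⟨w.concat (show (graphOf f).Adj _ _ from ⟨hfix, .inl rfl⟩),
        by simp only [Walk.length_concat]; omega⟩

lemma exists_walk_graphOf_of_iterate_eq {x y : X} {a b : ℕ} (h : f^[a] x = f^[b] y) :
    ∃ w : (graphOf f).Walk x y, w.length ≤ a + b := by
  obtain ⟨p, hp⟩ := exists_walk_graphOf_iterate (f := f) x a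
  obtain ⟨q, hq⟩ := exists_walk_graphOf_iterate (f := f) y b
  refine ⟨p.append (q.copy rfl h.symm).reverse, ?_⟩
  simp only [Walk.length_append, Walk.length_reverse, Walk.length_copy]
  omega

lemma exists_iterate_eq_of_walk_graphOf {x y : X} (w : (graphOf f).Walk x y) :
    ∃ a b : ℕ, a + b ≤ w.length ∧ f^[a] x = f^[b] y := by
  induction w with
  | nil => exact ⟨0, 0, le_rfl, rfl⟩
  | @cons u v y hadj w ih =>
    obtain ⟨a, b, hab, he⟩ := ih
    rw [Walk.length_cons]
    rcases hadj.2 with huv | hvu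
    · exact ⟨a + 1, b, by omega, by rw [Function.iterate_succ_apply, huv, he]⟩
    · refine ⟨a, b + 1, by omega, ?_⟩
      rw [← hvu, ← Function.iterate_succ_apply, Function.iterate_succ_apply', he,
        Function.iterate_succ_apply']

lemma exists_iterate_eq_of_dist_graphOf_le {x y : X} {r : ℕ} (hxy : (graphOf f).Reachable x y)
    (hd : (graphOf f).dist x y ≤ r) : ∃ s ≤ 2 * r, f^[r] y = f^[s] x := by
  obtain ⟨w, hw⟩ := hxy.exists_walk_length_eq_dist
  obtain ⟨a, b, hab, he⟩ := exists_iterate_eq_of_walk_graphOf w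
  refine ⟨(r - b) + a, by omega, ?_⟩
  rw [Function.iterate_add_apply, he, ← Function.iterate_add_apply, Nat.sub_add_cancel (by omega)]

end GraphOf

section FirstReturn

variable {X : Type*} {f : X → X} {Y : Set X}

lemma add_le_of_forall_iterate_notMem {x : X} {a i t : ℕ}
    (hmin : ∀ j, 0 < j → j < i → f^[j] (f^[a] x) ∉ Y) (hat : a < t) (hY : f^[t] x ∈ Y) :
    a + i ≤ t := by
  by_contra! hlt
  refine hmin (t - a) (by omega) (by omega) ?_
  rwa [← Function.iterate_add_apply, Nat.sub_add_cancel hat.le]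

def IsFirstReturnMap (f : X → X) (Y : Set X) (g : X → X) : Prop :=
  ∀ x : X, ∃ i : ℕ, 0 < i ∧ g x = f^[i] x ∧ f^[i] x ∈ Y ∧
    ∀ j : ℕ, 0 < j → j < i → f^[j] x ∉ Y

variable {g : X → X}

lemma IsFirstReturnMap.exists_iterate_eq (hg : IsFirstReturnMap f Y g) {m : ℕ}
    (hm : ∀ x : X, ∃ i : ℕ, 1 ≤ i ∧ i ≤ m ∧ f^[i] x ∈ Y) (x : X) (r : ℕ) :
    ∃ k ≤ r + m, g (f^[r] x) = f^[k] x := by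
  obtain ⟨i, -, hgi, -, hmin⟩ := hg (f^[r] x)
  obtain ⟨j, hj, hjm, hjY⟩ := hm (f^[r] x)
  rw [← Function.iterate_add_apply] at hgi hjY
  have := add_le_of_forall_iterate_notMem hmin (by omega : r < j + r) hjY
  exact ⟨i + r, by omega, hgi⟩

lemma IsFirstReturnMap.iterate_eq_or_eq (hg : IsFirstReturnMap f Y g) {r : ℕ}
    (hY : ∀ (x : X) (i j : ℕ), i ≤ 2 * r → j ≤ 2 * r →
      f^[i] x ∈ Y → f^[j] x ∈ Y → f^[i] x = f^[j] x)
    (x : X) {a s b : ℕ} (has : a ≤ s) (hsb : s ≤ b) (hb : b ≤ 2 * r) :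
    g (f^[s] x) = g (f^[a] x) ∨ g (f^[s] x) = g (f^[b] x) := by
  obtain ⟨i, hi, hgs, hYs, hmins⟩ := hg (f^[s] x)
  obtain ⟨ia, -, hga, hYa, hmina⟩ := hg (f^[a] x)
  obtain ⟨ib, hib, hgb, hYb, hminb⟩ := hg (f^[b] x)
  rw [← Function.iterate_add_apply] at hgs hYs hga hYa hgb hYb
  rw [hgs, hga, hgb]
  by_cases hvisit : i + s ≤ b
  · have := add_le_of_forall_iterate_notMem hmina (by omega : a < i + s) hYs
    exact .inl (hY x _ _ (by omega) (by omega) hYs hYa)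
  · have := add_le_of_forall_iterate_notMem hminb (by omega : b < i + s) hYs
    have := add_le_of_forall_iterate_notMem hmins (by omega : s < ib + b) hYb
    exact .inr (by rw [show i + s = ib + b by omega])

end FirstReturn

lemma exists_pair_forall_eq_or_eq {α β : Type*} [Nonempty α] {P : α → Prop} {h : α → β}
    {u v : β} (huv : ∀ y, P y → h y = u ∨ h y = v) :
    ∃ z₁ z₂, ∀ y, P y → h y = h z₁ ∨ h y = h z₂ := by
  by_cases hu : ∃ y, P y ∧ h y = u <;> by_cases hv : ∃ y, P y ∧ h y = v
  · obtain ⟨yu, -, rfl⟩ := hu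
    obtain ⟨yv, -, rfl⟩ := hv
    exact ⟨yu, yv, huv⟩
  · obtain ⟨yu, -, rfl⟩ := hu
    exact ⟨yu, yu, fun y hy => (huv y hy).elim .inl fun h => absurd ⟨y, hy, h⟩ hv⟩
  · obtain ⟨yv, -, rfl⟩ := hv
    exact ⟨yv, yv, fun y hy => (huv y hy).elim (fun h => absurd ⟨y, hy, h⟩ hu) .inl⟩
  · obtain ⟨z⟩ := ‹Nonempty α›
    exact ⟨z, z, fun y hy => (huv y hy).elim (fun h => absurd ⟨y, hy, h⟩ hu)
      fun h => absurd ⟨y, hy, h⟩ hv⟩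

/-- Recurrence-based equivalence relation has classes of bounded diameter and
balls of radius `r` meet at most 2 classes. -/
theorem stmt14 {X : Type*} (f : X → X) (Y : Set X) (m r : ℕ)
    (h1 : ∀ (x : X) (i j : ℕ), i ≤ 2 * r → j ≤ 2 * r →
      f^[i] x ∈ Y → f^[j] x ∈ Y → f^[i] x = f^[j] x)
    (h2 : ∀ x : X, ∃ i : ℕ, 1 ≤ i ∧ i ≤ m ∧ f^[i] x ∈ Y)
    (g : X → X)
    (hg : ∀ x : X, ∃ i : ℕ, 0 < i ∧ g x = f^[i] x ∧ f^[i] x ∈ Y ∧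
      ∀ j : ℕ, 0 < j → j < i → f^[j] x ∉ Y) :
    (∀ x y : X, g (f^[r] x) = g (f^[r] y) →
      (graphOf f).Reachable x y ∧ (graphOf f).dist x y ≤ 2 * (m + 3 * r)) ∧
    (∀ x : X, ∃ z₁ z₂ : X, ∀ y : X,
      (graphOf f).Reachable x y → (graphOf f).dist x y ≤ r →
      g (f^[r] y) = g (f^[r] z₁) ∨ g (f^[r] y) = g (f^[r] z₂)) := by
  have hret : IsFirstReturnMap f Y g := hg
  refine ⟨fun x y hxy => ?_, fun x => ?_⟩
  · obtain ⟨kx, hkx, hx⟩ := hret.exists_iterate_eq h2 x r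
    obtain ⟨ky, hky, hy⟩ := hret.exists_iterate_eq h2 y r
    obtain ⟨w, hw⟩ := exists_walk_graphOf_of_iterate_eq (hx ▸ hy ▸ hxy)
    exact ⟨⟨w⟩, (SimpleGraph.dist_le w).trans (by omega)⟩
  · have : Nonempty X := ⟨x⟩
    obtain ⟨z₁, z₂, hz⟩ := exists_pair_forall_eq_or_eq (u := g x) (v := g (f^[2 * r] x))
      (P := fun y => (graphOf f).Reachable x y ∧ (graphOf f).dist x y ≤ r)
      (h := fun y => g (f^[r] y)) fun y ⟨hxy, hd⟩ => by
        obtain ⟨s, hs, hys⟩ := exists_iterate_eq_of_dist_graphOf_le hxy hd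
        rw [hys]
        exact hret.iterate_eq_or_eq h1 x (Nat.zero_le s) hs le_rfl
    exact ⟨z₁, z₂, fun y hxy hd => hz y ⟨hxy, hd⟩⟩
end

section
/- Let (X, ρ) be an extended metric space in which every equivalence class of the relation E_ρ = {(x,y) : ρ(x,y) < ∞} is countable. Then for every r > 0 there exist sets U_0, U_1 covering X such that for i ∈ {0,1}, every class of the r-walk equivalence relation on U_i has finite diameter. (That is, the non-definable asymptotic separation index of any such space is at most 1.) -/
open scoped ENNReal NNReal

/-!
Fix a point `c` in every finite-distance class and cut each class into the annuli
`{x | k r ≤ edist x c < (k + 1) r}`. Points at distance `≤ r` have the same centre and annulus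
indices differing by at most one, so an `r`-walk inside the union of the annuli of one parity
never leaves its annulus, which is a set of finite diameter.
-/

def finiteEDistSetoid (X : Type*) [EMetricSpace X] : Setoid X where
  r x y := edist x y < ⊤
  iseqv :=
    ⟨fun x => by simp,
     fun h => by rwa [edist_comm],
     fun hxy hyz => (edist_triangle _ _ _).trans_lt (ENNReal.add_lt_top.2 ⟨hxy, hyz⟩)⟩

section Annuli

variable {X : Type*} [EMetricSpace X]

theorem eq_of_walkRel {β : Type*} {U : Set X} {s : ℝ≥0∞} (φ : X → β)
    (hφ : ∀ a ∈ U, ∀ b ∈ U, edist a b ≤ s → φ a = φ b) {x y : X} (h : walkRel U s x y) :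
    φ x = φ y :=
  (InvImage.equivalence _ φ eq_equivalence).eqvGen_iff.1 <|
    Relation.EqvGen.mono (fun a b hab => hφ a hab.1 b hab.2.1 hab.2.2) _ _ h

noncomputable def classCenter (x : X) : X :=
  (Quotient.mk (finiteEDistSetoid X) x).out

theorem edist_classCenter_lt_top (x : X) : edist x (classCenter x) < ⊤ := by
  rw [edist_comm]
  exact Quotient.mk_out (s := finiteEDistSetoid X) x

theorem classCenter_eq_of_edist_lt_top {x y : X} (h : edist x y < ⊤) :
    classCenter x = classCenter y :=
  congrArg Quotient.out (Quotient.sound (s := finiteEDistSetoid X) h)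

noncomputable def centerDist (x : X) : ℝ≥0 :=
  (edist x (classCenter x)).toNNReal

theorem coe_centerDist (x : X) : (centerDist x : ℝ≥0∞) = edist x (classCenter x) :=
  ENNReal.coe_toNNReal (edist_classCenter_lt_top x).ne

theorem centerDist_le_add {a b : X} {r : ℝ≥0} (h : edist a b ≤ r) :
    centerDist a ≤ centerDist b + r := by
  have hcenter := classCenter_eq_of_edist_lt_top (h.trans_lt ENNReal.coe_lt_top)
  rw [← ENNReal.coe_le_coe, ENNReal.coe_add, coe_centerDist, coe_centerDist, hcenter, add_comm]
  exact (edist_triangle _ _ _).trans (add_le_add_left h _)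

noncomputable def annulusIndex (r : ℝ≥0) (x : X) : ℕ :=
  ⌊centerDist x / r⌋₊

theorem annulusIndex_le_add_one {r : ℝ≥0} (hr : 0 < r) {a b : X} (h : edist a b ≤ r) :
    annulusIndex r a ≤ annulusIndex r b + 1 := by
  have hdiv : centerDist a / r ≤ centerDist b / r + 1 := by
    rw [← div_self hr.ne', ← add_div]
    exact div_le_div_of_nonneg_right (centerDist_le_add h) hr.le
  calc annulusIndex r a ≤ ⌊centerDist b / r + 1⌋₊ := Nat.floor_le_floor hdiv
    _ = annulusIndex r b + 1 := Nat.floor_add_one zero_le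

theorem centerDist_lt {r : ℝ≥0} (hr : 0 < r) (x : X) :
    centerDist x < r * (annulusIndex r x + 1) := by
  rw [mul_comm, ← div_lt_iff₀ hr]
  exact Nat.lt_floor_add_one _

theorem walkRel_annuli_eq {r : ℝ≥0} (hr : 0 < r) {i : ℕ} {x y : X}
    (h : walkRel {x | annulusIndex r x % 2 = i} r x y) :
    (classCenter x, annulusIndex r x) = (classCenter y, annulusIndex r y) := by
  refine eq_of_walkRel (fun z => (classCenter z, annulusIndex r z)) ?_ h
  intro a ha b hb hab
  have hba : edist b a ≤ r := by rwa [edist_comm]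
  have hab' := annulusIndex_le_add_one hr hab
  have hba' := annulusIndex_le_add_one hr hba
  simp only [Set.mem_ofPred_eq] at ha hb
  rw [classCenter_eq_of_edist_lt_top (hab.trans_lt ENNReal.coe_lt_top)]
  congr 1
  omega

theorem edist_le_of_walkRel_annuli {r : ℝ≥0} (hr : 0 < r) {i : ℕ} {x y : X}
    (h : walkRel {x | annulusIndex r x % 2 = i} r x y) :
    edist x y ≤ ((centerDist x + r * (annulusIndex r x + 1) : ℝ≥0) : ℝ≥0∞) := by
  obtain ⟨hcenter, hindex⟩ := Prod.mk_inj.1 (walkRel_annuli_eq hr h)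
  have hy : centerDist y ≤ r * (annulusIndex r x + 1) := by
    rw [hindex]
    exact (centerDist_lt hr y).le
  calc edist x y ≤ edist x (classCenter x) + edist (classCenter y) y := by
        rw [hcenter]; exact edist_triangle _ _ _
    _ = centerDist x + centerDist y := by
        rw [edist_comm _ y, coe_centerDist, coe_centerDist]
    _ ≤ _ := by rw [← ENNReal.coe_add]; gcongr

end Annuli

theorem stmt18_general {X : Type*} [EMetricSpace X] :
    ∀ r : ℝ≥0, 0 < r → ∃ U₀ U₁ : Set X, U₀ ∪ U₁ = Set.univ ∧
      (∀ x : X, ∃ R : ℝ≥0, ∀ y : X,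
        walkRel U₀ (r : ℝ≥0∞) x y → edist x y ≤ (R : ℝ≥0∞)) ∧
      (∀ x : X, ∃ R : ℝ≥0, ∀ y : X,
        walkRel U₁ (r : ℝ≥0∞) x y → edist x y ≤ (R : ℝ≥0∞)) := by
  intro r hr
  refine ⟨{x | annulusIndex r x % 2 = 0}, {x | annulusIndex r x % 2 = 1}, ?_, ?_, ?_⟩
  · ext x
    simp only [Set.mem_union, Set.mem_ofPred_eq, Set.mem_univ, iff_true]
    omega
  all_goals exact fun x => ⟨_, fun y h => edist_le_of_walkRel_annuli hr h⟩

/-- The (non-definable) asymptotic separation index of an extended metric space with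
countable finite-distance classes is at most 1. -/
theorem stmt18 {X : Type*} [EMetricSpace X]
    (hcount : ∀ x : X, {y : X | edist x y < ⊤}.Countable) :
    ∀ r : ℝ≥0, 0 < r → ∃ U₀ U₁ : Set X, U₀ ∪ U₁ = Set.univ ∧
      (∀ x : X, ∃ R : ℝ≥0, ∀ y : X,
        walkRel U₀ (r : ℝ≥0∞) x y → edist x y ≤ (R : ℝ≥0∞)) ∧
      (∀ x : X, ∃ R : ℝ≥0, ∀ y : X,
        walkRel U₁ (r : ℝ≥0∞) x y → edist x y ≤ (R : ℝ≥0∞)) :=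
  stmt18_general
end
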